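/- arXiv:1511.02090 — 6 statements merged into one kernel-verified Lean document; each statement's English description precedes it below -/
import Mathlib

section
/- Let X, V, W be real normed spaces, U a nonempty subset of V, and F : X × U → W a mapping such that for every x ∈ X the partial mapping F(x, ·) maps bounded subsets of U into bounded subsets of W. Then the following are equivalent: (i) for every sequence (x_t) ∈ c₀(ℕ, X) and every bounded sequence (u_t) with values in U, the sequence (F(x_t, u_t))_{t∈ℕ} belongs to c₀(ℕ, W); (ii) for every nonempty bounded subset B of U, lim_{x → 0} ( sup_{u ∈ B} ‖F(x, u)‖ ) = 0. -/
open Filter Topology Bornology Set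

/-- Theorem 3.1. Let `X, V, W` be real normed spaces, `U` a nonempty
subset of `V`, and `F : X × U → W` (here a total function `X → V → W` whose values off `U`
are irrelevant) such that for every `x ∈ X` the partial map `F x ·` sends bounded subsets
of `U` to bounded subsets of `W`.  Then (i) every sequence `(F (x t) (u t))` with
`x ∈ c₀(ℕ, X)` and `u` a bounded `U`-valued sequence tends to `0`, iff (ii) for every
nonempty bounded `B ⊆ U` one has `lim_{x → 0} sup_{u ∈ B} ‖F x u‖ = 0`. -/
theorem stmt_0 {X V W : Type*}
    [NormedAddCommGroup X] [NormedSpace ℝ X]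
    [NormedAddCommGroup V] [NormedSpace ℝ V]
    [NormedAddCommGroup W] [NormedSpace ℝ W]
    (U : Set V) (hU : U.Nonempty) (F : X → V → W)
    (hFbdd : ∀ x : X, ∀ B ⊆ U, IsBounded B → IsBounded ((fun u => F x u) '' B)) :
    (∀ x : ℕ → X, Tendsto x atTop (𝓝 0) →
      ∀ u : ℕ → V, (∀ t, u t ∈ U) → IsBounded (Set.range u) →
        Tendsto (fun t => F (x t) (u t)) atTop (𝓝 0))
    ↔
    (∀ B ⊆ U, B.Nonempty → IsBounded B →
      ∀ ε > (0 : ℝ), ∃ δ > (0 : ℝ), ∀ x : X, ‖x‖ < δ → ∀ u ∈ B, ‖F x u‖ < ε) := by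
  constructor
  · intro h B hBU hBne hBbdd ε hε
    by_contra hc
    push_neg at hc
    have key : ∀ n : ℕ, ∃ x : X, ‖x‖ < 1/(n+1) ∧ ∃ u ∈ B, ε ≤ ‖F x u‖ := by
      intro n
      exact hc (1/(n+1)) (by positivity)
    choose x hx u hu hFu using key
    have hx0 : Tendsto x atTop (𝓝 0) := by
      rw [tendsto_zero_iff_norm_tendsto_zero]
      have : Tendsto (fun n : ℕ => 1/((n:ℝ)+1)) atTop (𝓝 0) :=
        tendsto_one_div_add_atTop_nhds_zero_nat
      exact squeeze_zero (fun n => norm_nonneg _) (fun n => (hx n).le) this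
    have hrange : IsBounded (Set.range u) :=
      hBbdd.subset (Set.range_subset_iff.2 hu)
    have := h x hx0 u (fun t => hBU (hu t)) hrange
    rw [tendsto_zero_iff_norm_tendsto_zero] at this
    have hev := (this.eventually (eventually_lt_nhds hε)).exists
    obtain ⟨n, hn⟩ := hev
    exact absurd hn (not_lt.2 (hFu n))
  · intro h x hx u huU hub
    rw [tendsto_zero_iff_norm_tendsto_zero]
    rw [NormedAddCommGroup.tendsto_atTop]
    intro ε hε
    obtain ⟨δ, hδ, hδ'⟩ := h (Set.range u) (Set.range_subset_iff.2 huU)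
      (Set.range_nonempty u) hub ε hε
    rw [tendsto_zero_iff_norm_tendsto_zero, NormedAddCommGroup.tendsto_atTop] at hx
    obtain ⟨N, hN⟩ := hx δ hδ
    refine ⟨N, fun n hn => ?_⟩
    have := hδ' (x n) (by simpa using (abs_lt.1 (by simpa using hN n hn)).2) (u n) ⟨n, rfl⟩
    simpa using this
end

section
/- Let U be a nonempty closed subset of ℝᵈ and let F : ℝⁿ × U → ℝᵐ be continuous and satisfy lim_{x → 0} ( sup_{u ∈ B_R ∩ U} ‖F(x, u)‖ ) = 0 for every R ∈ (0, +∞), where B_R = {v ∈ ℝᵈ : ‖v‖ ≤ R}. Then the Nemytskii operator N_F, defined by N_F((x_t)_{t∈ℕ}, (u_t)_{t∈ℕ}) := (F(x_t, u_t))_{t∈ℕ}, is a well-defined continuous operator from c₀(ℕ, ℝⁿ) × ℓ∞(ℕ, U) into c₀(ℕ, ℝᵐ). -/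
open Filter Topology Bornology Set ZeroAtInfty
open scoped ENNReal

noncomputable section

instance : Fact ((1 : ℝ≥0∞) ≤ ⊤) := ⟨le_top⟩

set_option maxHeartbeats 2000000 in
/-- Theorem 3.5, continuity of the Nemytskii operator.  Let `U ⊆ ℝᵈ` be
nonempty closed and `F : ℝⁿ × U → ℝᵐ` (a total function) be continuous on `ℝⁿ × U` with
`lim_{x→0} sup_{u ∈ B_R ∩ U} ‖F(x,u)‖ = 0` for every `R > 0`.  Then the Nemytskii
operator `N_F(x, u) = (F (x t) (u t))_t` is a well-defined continuous operator from
`c₀(ℕ, ℝⁿ) × ℓ∞(ℕ, U)` into `c₀(ℕ, ℝᵐ)`: there is an operator `N` with values in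
`c₀(ℕ, ℝᵐ)` agreeing pointwise with `F` on the domain and continuous on the domain.
Here `c₀` is the space `C₀(ℕ, ·)` of sequences vanishing at infinity with the sup norm
and `ℓ∞(ℕ, U)` is the set of elements of `ℓ∞` with all values in `U`. -/
theorem stmt_2 {n d m : ℕ}
    (U : Set (Fin d → ℝ)) (hUne : U.Nonempty) (hUcl : IsClosed U)
    (F : (Fin n → ℝ) → (Fin d → ℝ) → (Fin m → ℝ))
    (hFc : ContinuousOn (fun q : (Fin n → ℝ) × (Fin d → ℝ) => F q.1 q.2) (Set.univ ×ˢ U))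
    (hFlim : ∀ R > (0 : ℝ), ∀ ε > (0 : ℝ), ∃ δ > (0 : ℝ), ∀ x : Fin n → ℝ, ‖x‖ < δ →
      ∀ u ∈ Metric.closedBall (0 : Fin d → ℝ) R ∩ U, ‖F x u‖ < ε) :
    ∃ N : C₀(ℕ, Fin n → ℝ) × lp (fun _ : ℕ => Fin d → ℝ) ⊤ → C₀(ℕ, Fin m → ℝ),
      (∀ (x : C₀(ℕ, Fin n → ℝ)) (u : lp (fun _ : ℕ => Fin d → ℝ) ⊤),
        (∀ t : ℕ, u t ∈ U) → ∀ t : ℕ, N (x, u) t = F (x t) (u t)) ∧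
      ContinuousOn N (Set.univ ×ˢ {u : lp (fun _ : ℕ => Fin d → ℝ) ⊤ | ∀ t : ℕ, u t ∈ U}) := by
  classical
  -- The key well-definedness fact: on the domain, the image sequence vanishes at infinity.
  have key : ∀ (x : C₀(ℕ, Fin n → ℝ)) (u : lp (fun _ : ℕ => Fin d → ℝ) ⊤),
      (∀ t : ℕ, u t ∈ U) →
      Tendsto (fun t => F (x t) (u t)) cofinite (𝓝 0) := by
    intro x u hu
    rw [NormedAddCommGroup.tendsto_nhds_zero]
    intro ε hε
    have hR : (0 : ℝ) < ‖u‖ + 1 := by positivity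
    obtain ⟨δ, hδ, hF⟩ := hFlim (‖u‖ + 1) hR ε hε
    have hx : Tendsto (fun t => x t) cofinite (𝓝 0) := by
      have := x.zero_at_infty'
      rwa [Filter.cocompact_eq_cofinite] at this
    have hx' : ∀ᶠ t in cofinite, ‖x t‖ < δ := by
      have := NormedAddCommGroup.tendsto_nhds_zero.mp hx δ hδ
      simpa using this
    filter_upwards [hx'] with t ht
    refine hF (x t) ht (u t) ⟨?_, hu t⟩
    rw [Metric.mem_closedBall, dist_zero_right]
    calc ‖u t‖ ≤ ‖u‖ := lp.norm_apply_le_norm ENNReal.top_ne_zero u t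
      _ ≤ ‖u‖ + 1 := by linarith
  -- Define the operator.
  set N' : C₀(ℕ, Fin n → ℝ) × lp (fun _ : ℕ => Fin d → ℝ) ⊤ → C₀(ℕ, Fin m → ℝ) := fun p =>
    if h : Tendsto (fun t => F (p.1 t) (p.2 t)) cofinite (𝓝 0) then
      ⟨⟨fun t => F (p.1 t) (p.2 t), continuous_of_discreteTopology⟩,
        by simpa [Filter.cocompact_eq_cofinite, Nat.cofinite_eq_atTop] using h⟩
    else 0 with hN
  have hagree : ∀ (x : C₀(ℕ, Fin n → ℝ)) (u : lp (fun _ : ℕ => Fin d → ℝ) ⊤),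
      (∀ t : ℕ, u t ∈ U) → ∀ t : ℕ, N' (x, u) t = F (x t) (u t) := by
    intro x u hu t
    simp only [hN]
    rw [dif_pos (key x u hu)]
    rfl
  refine ⟨N', hagree, ?_⟩
  · -- Continuity on the domain.
    rintro ⟨x, u⟩ ⟨-, hu⟩
    rw [Metric.continuousWithinAt_iff]
    intro ε hε
    simp only [Set.mem_setOf_eq] at hu
    -- radius bound
    have hR : (0 : ℝ) < ‖u‖ + 2 := by positivity
    obtain ⟨δ, hδ, hF⟩ := hFlim (‖u‖ + 2) hR (ε / 4) (by positivity)
    -- tail control: finitely many exceptional indices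
    have hx : Tendsto (fun t => x t) cofinite (𝓝 0) := by
      have := x.zero_at_infty'
      rwa [Filter.cocompact_eq_cofinite] at this
    have hx' : ∀ᶠ t in cofinite, ‖x t‖ < δ / 2 := by
      have := NormedAddCommGroup.tendsto_nhds_zero.mp hx (δ / 2) (by positivity)
      simpa using this
    have hTfin : {t : ℕ | ¬ ‖x t‖ < δ / 2}.Finite := hx'
    set T : Finset ℕ := hTfin.toFinset with hT
    -- for each exceptional index, use continuity of F at (x t, u t)
    have hcont : ∀ t : ℕ, ∃ η > (0 : ℝ), ∀ q : (Fin n → ℝ) × (Fin d → ℝ),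
        q ∈ Set.univ ×ˢ U → dist q (x t, u t) < η →
        dist (F q.1 q.2) (F (x t) (u t)) < ε / 2 := by
      intro t
      have h1 : ContinuousWithinAt (fun q : (Fin n → ℝ) × (Fin d → ℝ) => F q.1 q.2)
          (Set.univ ×ˢ U) (x t, u t) := hFc (x t, u t) ⟨trivial, hu t⟩
      rw [Metric.continuousWithinAt_iff] at h1
      obtain ⟨η, hη, h2⟩ := h1 (ε / 2) (by positivity)
      exact ⟨η, hη, fun q hq hd => h2 hq hd⟩
    choose η hηpos hη using hcont
    -- global radius
    set η₀ : ℝ := min (min (δ / 2) 1) ((insert 0 T).inf' (Finset.insert_nonempty _ _) η)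
      with hη₀
    have hη₀pos : 0 < η₀ := by
      apply lt_min (lt_min (by positivity) one_pos)
      apply Finset.lt_inf'_iff _ |>.mpr
      intro t _
      exact hηpos t
    refine ⟨η₀, hη₀pos, ?_⟩
    rintro ⟨x', u'⟩ ⟨-, hu'⟩ hdist
    simp only [Set.mem_setOf_eq] at hu'
    -- pointwise estimate
    have hxd : ∀ t : ℕ, ‖x' t - x t‖ < η₀ := by
      intro t
      calc ‖x' t - x t‖ = ‖(x' - x) t‖ := by simp
        _ ≤ ‖x' - x‖ := by
            rw [← ZeroAtInftyContinuousMap.norm_toBCF_eq_norm]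
            exact (x' - x).toBCF.norm_coe_le_norm t
        _ = dist x' x := (dist_eq_norm x' x).symm
        _ ≤ dist (⟨x', u'⟩ : C₀(ℕ, Fin n → ℝ) × lp (fun _ : ℕ => Fin d → ℝ) ⊤) (x, u) :=
            le_max_left _ _
        _ < η₀ := hdist
    have hud : ∀ t : ℕ, ‖u' t - u t‖ < η₀ := by
      intro t
      calc ‖u' t - u t‖ = ‖(u' - u) t‖ := by simp
        _ ≤ ‖u' - u‖ := lp.norm_apply_le_norm ENNReal.top_ne_zero (u' - u) t
        _ = dist u' u := (dist_eq_norm u' u).symm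
        _ ≤ dist (⟨x', u'⟩ : C₀(ℕ, Fin n → ℝ) × lp (fun _ : ℕ => Fin d → ℝ) ⊤) (x, u) :=
            le_max_right _ _
        _ < η₀ := hdist
    have hη₀le1 : η₀ ≤ 1 := le_trans (min_le_left _ _) (min_le_right _ _)
    have hη₀leδ : η₀ ≤ δ / 2 := le_trans (min_le_left _ _) (min_le_left _ _)
    have hptwise : ∀ t : ℕ, ‖F (x' t) (u' t) - F (x t) (u t)‖ ≤ ε / 2 := by
      intro t
      by_cases ht : t ∈ T
      · -- use continuity of F
        have hη₀leη : η₀ ≤ η t := by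
          refine le_trans (min_le_right _ _) ?_
          exact Finset.inf'_le η (Finset.mem_insert_of_mem ht)
        have hq : ((x' t, u' t) : (Fin n → ℝ) × (Fin d → ℝ)) ∈ Set.univ ×ˢ U :=
          ⟨trivial, hu' t⟩
        have hd : dist ((x' t, u' t) : (Fin n → ℝ) × (Fin d → ℝ)) (x t, u t) < η t := by
          rw [Prod.dist_eq]
          apply max_lt
          · rw [dist_eq_norm]; exact lt_of_lt_of_le (hxd t) hη₀leη
          · rw [dist_eq_norm]; exact lt_of_lt_of_le (hud t) hη₀leη
        have := hη t (x' t, u' t) hq hd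
        rw [dist_eq_norm] at this
        exact le_of_lt this
      · -- tail: both values are small
        have hxt : ‖x t‖ < δ / 2 := by
          by_contra h
          exact ht (hTfin.mem_toFinset.mpr h)
        have hxt' : ‖x' t‖ < δ := by
          calc ‖x' t‖ ≤ ‖x' t - x t‖ + ‖x t‖ := by
                simpa using norm_add_le (x' t - x t) (x t)
            _ < η₀ + δ / 2 := by linarith [hxd t, hxt]
            _ ≤ δ / 2 + δ / 2 := by linarith [hη₀leδ]
            _ = δ := by ring
        have hut : (u t) ∈ Metric.closedBall (0 : Fin d → ℝ) (‖u‖ + 2) ∩ U := by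
          refine ⟨?_, hu t⟩
          rw [Metric.mem_closedBall, dist_zero_right]
          have := lp.norm_apply_le_norm ENNReal.top_ne_zero u t
          linarith
        have hut' : (u' t) ∈ Metric.closedBall (0 : Fin d → ℝ) (‖u‖ + 2) ∩ U := by
          refine ⟨?_, hu' t⟩
          rw [Metric.mem_closedBall, dist_zero_right]
          have h1 := lp.norm_apply_le_norm ENNReal.top_ne_zero u t
          have h2 := hud t
          calc ‖u' t‖ ≤ ‖u' t - u t‖ + ‖u t‖ := by
                simpa using norm_add_le (u' t - u t) (u t)
            _ ≤ ‖u‖ + 2 := by linarith [hη₀le1]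
        have h1 := hF (x' t) hxt' (u' t) hut'
        have h2 := hF (x t) (lt_of_lt_of_le hxt (by linarith)) (u t) hut
        calc ‖F (x' t) (u' t) - F (x t) (u t)‖
            ≤ ‖F (x' t) (u' t)‖ + ‖F (x t) (u t)‖ := norm_sub_le _ _
          _ ≤ ε / 4 + ε / 4 := by linarith
          _ = ε / 2 := by ring
    -- assemble: the distance in C₀ is at most ε/2 < ε
    rw [dist_eq_norm]
    have hnorm : ‖N' (x', u') - N' (x, u)‖ ≤ ε / 2 := by
      rw [← ZeroAtInftyContinuousMap.norm_toBCF_eq_norm]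
      refine (BoundedContinuousFunction.norm_le (by positivity)).mpr ?_
      intro t
      have : (N' (x', u') - N' (x, u)) t = F (x' t) (u' t) - F (x t) (u t) := by
        simp [hagree x' u' hu' t, hagree x u hu t]
      simpa [this] using hptwise t
    exact lt_of_le_of_lt hnorm (by linarith)
end
end

section
/- Let U be a nonempty closed subset of ℝᵈ and f : ℝⁿ × U → ℝⁿ a mapping satisfying: (i) f is of class C¹ on ℝⁿ × U; (ii) there exists u⁰ ∈ U with f(0, u⁰) = 0 and U is star-shaped with respect to u⁰; (iii) lim_{x → 0} ( sup_{u ∈ B} ‖Df(x, u)‖ ) = 0 for every nonempty bounded subset B ⊂ U. Define the operator 𝒯(x, u) := (x_{t+1} − f(x_t, u_t))_{t∈ℕ}. Then 𝒯 is a continuously Fréchet differentiable mapping from c₀(ℕ, ℝⁿ) × ℓ∞(ℕ, U) into c₀(ℕ, ℝⁿ), and for all x ∈ c₀(ℕ, ℝⁿ), u ∈ ℓ∞(ℕ, U), δx ∈ c₀(ℕ, ℝⁿ), δu ∈ ℓ∞(ℕ, ℝᵈ), one has D𝒯(x, u)(δx, δu) = (δx_{t+1} − D₁f(x_t, u_t)δx_t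 − D₂f(x_t, u_t)δu_t)_{t∈ℕ}. -/
open Filter Topology Bornology Set ZeroAtInfty
open scoped ENNReal

noncomputable section

/-!
By (iii), `Df (0, u) = 0` for `u ∈ U`, so `f (0, ·)` is constant, hence zero, on the star-shaped
set `U`. Thus on `ℓ∞(ℕ, U)` the operator is `𝒯 = shift ∘ fst - N`, where `N` is the
superposition operator of `G (x, u) = f (x, u) - f (0, u)`, a `C¹` map vanishing on `{0} × U₁`.
If `u` takes values in a compact `K ⊆ U₁`, the points `(x t, u t)` and all points within a
fixed distance of them stay in a compact subset of `ℝⁿ × U₁`, on which `DG` is uniformly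
continuous. This uniformity in `t` makes the mean value remainder `o(‖δ‖)` simultaneously for
all `t` (Fréchet differentiability with the pointwise derivative) and makes the derivative
continuous in operator norm; `G (0, ·) = 0` and `D₂G (0, ·) = 0` make values and
derivatives null sequences.
-/

open Metric
open scoped lp

namespace ZeroAtInftyContinuousMap

section General

variable {α V : Type*} [TopologicalSpace α] [NormedAddCommGroup V]

theorem norm_apply_le (x : C₀(α, V)) (a : α) : ‖x a‖ ≤ ‖x‖ := by
  rw [← norm_toBCF_eq_norm]
  exact x.toBCF.norm_coe_le_norm a

theorem norm_le_of_forall_le {x : C₀(α, V)} {C : ℝ} (hC : 0 ≤ C) (h : ∀ a, ‖x a‖ ≤ C) :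
    ‖x‖ ≤ C := by
  rw [← norm_toBCF_eq_norm]
  exact (BoundedContinuousFunction.norm_le hC).2 h

variable [NormedSpace ℝ V]

variable (α V) in
def evalCLM (a : α) : C₀(α, V) →L[ℝ] V :=
  LinearMap.mkContinuous
    { toFun := fun x => x a, map_add' := fun _ _ => rfl, map_smul' := fun _ _ => rfl } 1
    fun x => by simpa using norm_apply_le x a

theorem opNorm_le_of_forall_norm_le {X : Type*} [NormedAddCommGroup X] [NormedSpace ℝ X]
    {L : X →L[ℝ] C₀(α, V)} {A : α → X →L[ℝ] V} (hL : ∀ δ a, L δ a = A a δ) {C : ℝ}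
    (hC : 0 ≤ C) (hA : ∀ a, ‖A a‖ ≤ C) : ‖L‖ ≤ C :=
  L.opNorm_le_bound hC fun δ => norm_le_of_forall_le (by positivity) fun a =>
    hL δ a ▸ (A a).le_of_opNorm_le (hA a) δ

end General

section Nat

variable {V : Type*} [NormedAddCommGroup V]

theorem tendsto_atTop_zero (x : C₀(ℕ, V)) : Tendsto x atTop (𝓝 0) := by
  simpa [cocompact_eq_cofinite, Nat.cofinite_eq_atTop] using zero_at_infty x

open Classical in
/-- The null sequence `a` as an element of `C₀(ℕ, V)`, and `0` if `a` does not tend to `0`. -/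
def ofSeq (a : ℕ → V) : C₀(ℕ, V) :=
  if h : Tendsto a atTop (𝓝 0) then
    ⟨⟨a, continuous_of_discreteTopology⟩, by rwa [cocompact_eq_cofinite, Nat.cofinite_eq_atTop]⟩
  else 0

theorem ofSeq_apply {a : ℕ → V} (h : Tendsto a atTop (𝓝 0)) (t : ℕ) : ofSeq a t = a t := by
  simp only [ofSeq, dif_pos h]
  rfl

variable [NormedSpace ℝ V]

theorem exists_continuousLinearMap_apply_eq {X : Type*} [NormedAddCommGroup X]
    [NormedSpace ℝ X] (A : ℕ → X →L[ℝ] V) {C : ℝ} (hA : ∀ t, ‖A t‖ ≤ C)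
    (h0 : ∀ δ, Tendsto (fun t => A t δ) atTop (𝓝 0)) :
    ∃ L : X →L[ℝ] C₀(ℕ, V), ∀ δ t, L δ t = A t δ := by
  let L : X →ₗ[ℝ] C₀(ℕ, V) :=
    { toFun := fun δ => ofSeq fun t => A t δ
      map_add' := fun δ δ' => by
        ext t
        rw [coe_add, Pi.add_apply, ofSeq_apply (h0 _), ofSeq_apply (h0 _), ofSeq_apply (h0 _),
          map_add]
      map_smul' := fun c δ => by
        ext t
        rw [coe_smul, Pi.smul_apply, ofSeq_apply (h0 _), ofSeq_apply (h0 _), map_smul,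
          RingHom.id_apply] }
  have hC : 0 ≤ C := (norm_nonneg _).trans (hA 0)
  refine ⟨L.mkContinuous C fun δ => norm_le_of_forall_le (by positivity) fun t => ?_,
    fun δ t => ofSeq_apply (h0 δ) t⟩
  simpa [L, ofSeq_apply (h0 δ)] using (A t).le_of_opNorm_le (hA t) δ

variable (V) in
def shift : C₀(ℕ, V) →L[ℝ] C₀(ℕ, V) :=
  LinearMap.mkContinuous (compLinearMap
    ⟨⟨Nat.succ, continuous_of_discreteTopology⟩, by
      simpa [cocompact_eq_cofinite, Nat.cofinite_eq_atTop] using tendsto_add_atTop_nat 1⟩) 1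
    fun x => by rw [one_mul]; exact norm_le_of_forall_le (norm_nonneg x) fun t => norm_apply_le x _

theorem shift_apply (x : C₀(ℕ, V)) (t : ℕ) : shift V x t = x (t + 1) := rfl

end Nat

end ZeroAtInftyContinuousMap

theorem IsCompact.exists_forall_dist_lt_of_continuousOn {X Y : Type*} [PseudoMetricSpace X]
    [PseudoMetricSpace Y] {K S : Set X} {g : X → Y} (hK : IsCompact K) (hS : IsOpen S)
    (hKS : K ⊆ S) (hg : ContinuousOn g S) {ε : ℝ} (hε : 0 < ε) :
    ∃ δ > 0, ∀ k ∈ K, ∀ z, dist z k < δ → z ∈ S ∧ dist (g z) (g k) < ε := by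
  obtain ⟨δ₁, hδ₁, hthick⟩ := hK.exists_thickening_subset_open hS hKS
  obtain ⟨δ₂, hδ₂, hunif⟩ := Metric.mem_uniformity_dist.1
    (hK.uniformContinuousAt_of_continuousAt g (fun k hk => hg.continuousAt (hS.mem_nhds (hKS hk)))
      (dist_mem_uniformity hε))
  refine ⟨min δ₁ δ₂, lt_min hδ₁ hδ₂, fun k hk z hz => ⟨hthick ?_, ?_⟩⟩
  · exact mem_thickening_iff.2 ⟨k, hk, hz.trans_le (min_le_left _ _)⟩
  · rw [dist_comm]
    exact hunif (by rw [dist_comm]; exact hz.trans_le (min_le_right _ _)) hk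

section BoundedSequences

variable {F : Type*} [NormedAddCommGroup F]

theorem lp.dist_apply_le_dist (u v : ℓ^∞(ℕ, F)) (t : ℕ) : dist (u t) (v t) ≤ dist u v := by
  simpa only [dist_eq_norm, lp.coeFn_sub, Pi.sub_apply] using
    lp.norm_apply_le_norm ENNReal.top_ne_zero (u - v) t

theorem lp.isCompact_closure_range [ProperSpace F] (u : ℓ^∞(ℕ, F)) :
    IsCompact (closure (range ⇑u)) := by
  refine (isBounded_closedBall (x := 0) (r := ‖u‖)).subset ?_ |>.isCompact_closure
  rintro - ⟨t, rfl⟩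
  simpa using lp.norm_apply_le_norm ENNReal.top_ne_zero u t

/-- The open set `O ⊇ ℓ∞(ℕ, U)` of the theorem; for proper `F`, the sequences with values in a
compact subset of `U₁`. -/
def lpInftyCompactlyIn (U₁ : Set F) : Set ℓ^∞(ℕ, F) := {u | closure (range ⇑u) ⊆ U₁}

theorem isOpen_lpInftyCompactlyIn [ProperSpace F] {U₁ : Set F} (hU₁ : IsOpen U₁) :
    IsOpen (lpInftyCompactlyIn U₁) := by
  refine Metric.isOpen_iff.2 fun u hu => ?_
  obtain ⟨δ, hδ, hthick⟩ := (lp.isCompact_closure_range u).exists_thickening_subset_open hU₁ hu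
  refine ⟨δ, hδ, fun v hv => ?_⟩
  have hrange : range ⇑v ⊆ cthickening (dist v u) (closure (range ⇑u)) := by
    rintro - ⟨t, rfl⟩
    exact mem_cthickening_of_dist_le _ (u t) _ _ (subset_closure ⟨t, rfl⟩)
      (lp.dist_apply_le_dist v u t)
  exact (closure_minimal hrange isClosed_cthickening).trans
    ((cthickening_subset_thickening' hδ hv _).trans hthick)

theorem apply_mem_of_mem_lpInftyCompactlyIn {U₁ : Set F} {u : ℓ^∞(ℕ, F)}
    (hu : u ∈ lpInftyCompactlyIn U₁) (t : ℕ) : u t ∈ U₁ :=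
  hu (subset_closure ⟨t, rfl⟩)

theorem mem_lpInftyCompactlyIn_of_forall_mem {U U₁ : Set F} (hU : IsClosed U) (hUU₁ : U ⊆ U₁)
    {u : ℓ^∞(ℕ, F)} (hu : ∀ t, u t ∈ U) : u ∈ lpInftyCompactlyIn U₁ :=
  (closure_minimal (range_subset_iff.2 hu) hU).trans hUU₁

end BoundedSequences

section SeqEval

variable {E F : Type*} [NormedAddCommGroup E] [NormedSpace ℝ E]
  [NormedAddCommGroup F] [NormedSpace ℝ F]

def seqEvalCLM (t : ℕ) : C₀(ℕ, E) × ℓ^∞(ℕ, F) →L[ℝ] E × F :=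
  (ZeroAtInftyContinuousMap.evalCLM ℕ E t).prodMap (lp.evalCLM ℝ (fun _ => F) ∞ t)

@[simp]
theorem seqEvalCLM_apply (t : ℕ) (p : C₀(ℕ, E) × ℓ^∞(ℕ, F)) :
    seqEvalCLM t p = (p.1 t, p.2 t) := rfl

theorem norm_seqEvalCLM_apply_le (t : ℕ) (p : C₀(ℕ, E) × ℓ^∞(ℕ, F)) :
    ‖seqEvalCLM t p‖ ≤ ‖p‖ :=
  max_le ((ZeroAtInftyContinuousMap.norm_apply_le _ t).trans (norm_fst_le p))
    ((lp.norm_apply_le_norm ENNReal.top_ne_zero _ t).trans (norm_snd_le p))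

theorem dist_seqEvalCLM_apply_le (t : ℕ) (p p' : C₀(ℕ, E) × ℓ^∞(ℕ, F)) :
    dist (seqEvalCLM t p) (seqEvalCLM t p') ≤ dist p p' := by
  simpa only [dist_eq_norm, ← map_sub] using norm_seqEvalCLM_apply_le t (p - p')

theorem isCompact_closure_range_seqEvalCLM [ProperSpace E] [ProperSpace F]
    (p : C₀(ℕ, E) × ℓ^∞(ℕ, F)) : IsCompact (closure (range fun t => seqEvalCLM t p)) := by
  refine (isBounded_closedBall (x := 0) (r := ‖p‖)).subset ?_ |>.isCompact_closure
  rintro - ⟨t, rfl⟩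
  simpa using norm_seqEvalCLM_apply_le t p

theorem closure_range_seqEvalCLM_subset {U₁ : Set F} {p : C₀(ℕ, E) × ℓ^∞(ℕ, F)}
    (hp : p.2 ∈ lpInftyCompactlyIn U₁) :
    closure (range fun t => seqEvalCLM t p) ⊆ univ ×ˢ U₁ := by
  refine (closure_minimal ?_ (isClosed_univ.prod isClosed_closure)).trans
    (prod_mono subset_rfl hp)
  rintro - ⟨t, rfl⟩
  exact ⟨trivial, subset_closure ⟨t, rfl⟩⟩

theorem norm_comp_seqEvalCLM_le {V : Type*} [NormedAddCommGroup V] [NormedSpace ℝ V]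
    (A : E × F →L[ℝ] V) (t : ℕ) : ‖A.comp (seqEvalCLM t)‖ ≤ ‖A‖ :=
  (A.comp _).opNorm_le_bound (norm_nonneg _) fun p =>
    (A.le_opNorm _).trans (mul_le_mul_of_nonneg_left (norm_seqEvalCLM_apply_le t p) (norm_nonneg _))

end SeqEval

section Nemytskii

variable {E F V : Type*} [NormedAddCommGroup E] [NormedSpace ℝ E] [NormedAddCommGroup F]
  [NormedSpace ℝ F] [NormedAddCommGroup V] [NormedSpace ℝ V] {U₁ : Set F}

theorem HasFDerivAt.apply_inr_eq_zero {G : E × F → V} {L : E × F →L[ℝ] V} {w : F}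
    (hG : HasFDerivAt G L (0, w)) (h0 : ∀ᶠ v in 𝓝 w, G (0, v) = 0) (b : F) : L (0, b) = 0 := by
  have h1 : HasFDerivAt (fun v => G (0, v)) (L.comp (ContinuousLinearMap.inr ℝ E F)) w :=
    hG.comp w (hasFDerivAt_prodMk_right 0 w)
  have h2 : HasFDerivAt (fun v => G (0, v)) (0 : F →L[ℝ] V) w :=
    (hasFDerivAt_const 0 w).congr_of_eventuallyEq h0
  simpa using congrArg (· b) (h1.unique h2)

theorem exists_forall_dist_apply_lt [ProperSpace E] [ProperSpace F] {Y : Type*}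
    [PseudoMetricSpace Y] {g : E × F → Y} (hU₁ : IsOpen U₁) (hg : ContinuousOn g (univ ×ˢ U₁))
    {p : C₀(ℕ, E) × ℓ^∞(ℕ, F)} (hp : p.2 ∈ lpInftyCompactlyIn U₁) {ε : ℝ} (hε : 0 < ε) :
    ∃ δ > 0, ∀ t z, dist z (p.1 t, p.2 t) < δ → z.2 ∈ U₁ ∧ dist (g z) (g (p.1 t, p.2 t)) < ε := by
  obtain ⟨δ, hδ, h⟩ := (isCompact_closure_range_seqEvalCLM p).exists_forall_dist_lt_of_continuousOn
    (isOpen_univ.prod hU₁) (closure_range_seqEvalCLM_subset hp) hg hε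
  refine ⟨δ, hδ, fun t z hz => ?_⟩
  obtain ⟨⟨-, hz₂⟩, hgz⟩ := h _ (subset_closure ⟨t, rfl⟩) z hz
  exact ⟨hz₂, hgz⟩

theorem tendsto_sub_apply_zero_fst [ProperSpace E] [ProperSpace F] {Y : Type*}
    [NormedAddCommGroup Y] {g : E × F → Y} (hU₁ : IsOpen U₁) (hg : ContinuousOn g (univ ×ˢ U₁))
    {u : ℓ^∞(ℕ, F)} (hu : u ∈ lpInftyCompactlyIn U₁) {x : ℕ → E} (hx : Tendsto x atTop (𝓝 0)) :
    Tendsto (fun t => g (x t, u t) - g (0, u t)) atTop (𝓝 0) := by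
  refine NormedAddGroup.tendsto_nhds_zero.2 fun ε hε => ?_
  obtain ⟨δ, hδ, hnear⟩ := exists_forall_dist_apply_lt (p := ((0 : C₀(ℕ, E)), u)) hU₁ hg hu hε
  filter_upwards [NormedAddGroup.tendsto_nhds_zero.1 hx δ hδ] with t ht
  simpa [dist_eq_norm] using (hnear t (x t, u t) (by simpa [Prod.dist_eq, dist_eq_norm] using ht)).2

theorem exists_forall_norm_apply_le [ProperSpace E] [ProperSpace F] {Y : Type*}
    [NormedAddCommGroup Y] {g : E × F → Y} (hg : ContinuousOn g (univ ×ˢ U₁))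
    {p : C₀(ℕ, E) × ℓ^∞(ℕ, F)} (hp : p.2 ∈ lpInftyCompactlyIn U₁) :
    ∃ M, ∀ t, ‖g (p.1 t, p.2 t)‖ ≤ M := by
  obtain ⟨M, hM⟩ := (isCompact_closure_range_seqEvalCLM p).exists_bound_of_continuousOn
    (hg.mono (closure_range_seqEvalCLM_subset hp))
  exact ⟨M, fun t => hM _ (subset_closure ⟨t, rfl⟩)⟩

structure NemytskiiHypotheses (G : E × F → V) (D : E × F → E × F →L[ℝ] V) (U₁ : Set F) :
    Prop where
  isOpen : IsOpen U₁
  hasFDerivAt : ∀ q : E × F, q.2 ∈ U₁ → HasFDerivAt G (D q) q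
  continuousOn_deriv : ContinuousOn D (univ ×ˢ U₁)
  apply_zero : ∀ w ∈ U₁, G (0, w) = 0

def nemytskii (G : E × F → V) (p : C₀(ℕ, E) × ℓ^∞(ℕ, F)) : C₀(ℕ, V) :=
  ZeroAtInftyContinuousMap.ofSeq fun t => G (p.1 t, p.2 t)

namespace NemytskiiHypotheses

variable {G : E × F → V} {D : E × F → E × F →L[ℝ] V} {p : C₀(ℕ, E) × ℓ^∞(ℕ, F)}

theorem continuousOn (h : NemytskiiHypotheses G D U₁) : ContinuousOn G (univ ×ˢ U₁) :=
  fun q hq => (h.hasFDerivAt q hq.2).continuousAt.continuousWithinAt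

theorem apply_zero_inr (h : NemytskiiHypotheses G D U₁) {w : F} (hw : w ∈ U₁) (b : F) :
    D (0, w) (0, b) = 0 :=
  (h.hasFDerivAt _ hw).apply_inr_eq_zero
    (eventually_of_mem (h.isOpen.mem_nhds hw) h.apply_zero) b

theorem of_contDiffOn {φ : E × F → V} (hU₁ : IsOpen U₁) (hφ : ContDiffOn ℝ 1 φ (univ ×ˢ U₁)) :
    NemytskiiHypotheses (fun q => φ q - φ (0, q.2))
      (fun q => fderiv ℝ φ q - (fderiv ℝ φ (0, q.2)).comp ((0 : E × F →L[ℝ] E).prod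
        (ContinuousLinearMap.snd ℝ E F))) U₁ where
  isOpen := hU₁
  hasFDerivAt q hq := by
    have hd : ∀ q : E × F, q.2 ∈ U₁ → HasFDerivAt φ (fderiv ℝ φ q) q := fun q hq =>
      ((hφ.contDiffAt ((isOpen_univ.prod hU₁).mem_nhds ⟨trivial, hq⟩)).differentiableAt
        one_ne_zero).hasFDerivAt
    exact (hd q hq).sub ((hd (0, q.2) hq).comp q ((hasFDerivAt_const 0 q).prodMk hasFDerivAt_snd))
  continuousOn_deriv := by
    have hφ' := hφ.continuousOn_fderiv_of_isOpen (isOpen_univ.prod hU₁) le_rfl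
    exact hφ'.sub ((hφ'.comp (continuous_const.prodMk continuous_snd).continuousOn
      fun q hq => ⟨trivial, hq.2⟩).clm_comp continuousOn_const)
  apply_zero _ _ := sub_self _

variable [ProperSpace E] [ProperSpace F]

theorem nemytskii_apply (h : NemytskiiHypotheses G D U₁) (hp : p.2 ∈ lpInftyCompactlyIn U₁)
    (t : ℕ) : nemytskii G p t = G (p.1 t, p.2 t) := by
  refine ZeroAtInftyContinuousMap.ofSeq_apply ?_ t
  simpa [h.apply_zero _ (apply_mem_of_mem_lpInftyCompactlyIn hp _)] using
    tendsto_sub_apply_zero_fst h.isOpen h.continuousOn hp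
      (ZeroAtInftyContinuousMap.tendsto_atTop_zero p.1)

theorem tendsto_deriv_apply (h : NemytskiiHypotheses G D U₁) (hp : p.2 ∈ lpInftyCompactlyIn U₁)
    (δ : C₀(ℕ, E) × ℓ^∞(ℕ, F)) :
    Tendsto (fun t => D (p.1 t, p.2 t) (δ.1 t, δ.2 t)) atTop (𝓝 0) := by
  obtain ⟨M, hM⟩ := exists_forall_norm_apply_le h.continuousOn_deriv hp
  have hsplit : ∀ t, D (p.1 t, p.2 t) (δ.1 t, δ.2 t) =
      D (p.1 t, p.2 t) (δ.1 t, 0) + (D (p.1 t, p.2 t) - D (0, p.2 t)) (0, δ.2 t) := fun t => by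
    rw [sub_apply, h.apply_zero_inr (apply_mem_of_mem_lpInftyCompactlyIn hp t),
      sub_zero, ← map_add, Prod.mk_add_mk, add_zero, zero_add]
  have hx : Tendsto (fun t => D (p.1 t, p.2 t) (δ.1 t, 0)) atTop (𝓝 0) := by
    refine squeeze_zero_norm (fun t => ?_) (by simpa using
      (ZeroAtInftyContinuousMap.tendsto_atTop_zero δ.1).norm.const_mul M)
    simpa using (D (p.1 t, p.2 t)).le_of_opNorm_le (hM t) (δ.1 t, 0)
  have hu : Tendsto (fun t => (D (p.1 t, p.2 t) - D (0, p.2 t)) (0, δ.2 t)) atTop (𝓝 0) := by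
    refine squeeze_zero_norm (fun t => ?_) (by simpa using (tendsto_sub_apply_zero_fst h.isOpen
      h.continuousOn_deriv hp (ZeroAtInftyContinuousMap.tendsto_atTop_zero p.1)).norm.mul_const ‖δ‖)
    refine ((D (p.1 t, p.2 t) - D (0, p.2 t)).le_opNorm _).trans
      (mul_le_mul_of_nonneg_left ?_ (norm_nonneg _))
    simpa using (norm_seqEvalCLM_apply_le t δ).trans' (le_max_right _ _)
  simpa [hsplit] using hx.add hu

theorem exists_continuousLinearMap_apply_eq (h : NemytskiiHypotheses G D U₁)
    (hp : p.2 ∈ lpInftyCompactlyIn U₁) :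
    ∃ L : C₀(ℕ, E) × ℓ^∞(ℕ, F) →L[ℝ] C₀(ℕ, V),
      ∀ δ t, L δ t = D (p.1 t, p.2 t) (δ.1 t, δ.2 t) := by
  obtain ⟨M, hM⟩ := exists_forall_norm_apply_le h.continuousOn_deriv hp
  exact ZeroAtInftyContinuousMap.exists_continuousLinearMap_apply_eq
    (fun t => (D (p.1 t, p.2 t)).comp (seqEvalCLM t))
    (fun t => (norm_comp_seqEvalCLM_le _ t).trans (hM t)) (h.tendsto_deriv_apply hp)

theorem hasFDerivAt_nemytskii (h : NemytskiiHypotheses G D U₁)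
    (hp : p.2 ∈ lpInftyCompactlyIn U₁) {L : C₀(ℕ, E) × ℓ^∞(ℕ, F) →L[ℝ] C₀(ℕ, V)}
    (hL : ∀ δ t, L δ t = D (p.1 t, p.2 t) (δ.1 t, δ.2 t)) : HasFDerivAt (nemytskii G) L p := by
  rw [hasFDerivAt_iff_isLittleO, Asymptotics.isLittleO_iff]
  intro c hc
  obtain ⟨r, hr, hnear⟩ := exists_forall_dist_apply_lt h.isOpen h.continuousOn_deriv hp hc
  filter_upwards [(isOpen_univ.prod (isOpen_lpInftyCompactlyIn h.isOpen)).mem_nhds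
    (mem_prod.2 ⟨trivial, hp⟩), ball_mem_nhds p hr] with p' hp' hdist
  refine ZeroAtInftyContinuousMap.norm_le_of_forall_le (by positivity) fun t => ?_
  rw [ZeroAtInftyContinuousMap.sub_apply, ZeroAtInftyContinuousMap.sub_apply,
    h.nemytskii_apply hp'.2, h.nemytskii_apply hp, hL]
  have hmvt := (convex_ball _ r).norm_image_sub_le_of_norm_hasFDerivWithin_le' (f := G) (f' := D)
    (fun z hz => (h.hasFDerivAt z (hnear t z hz).1).hasFDerivWithinAt)
    (fun z hz => by simpa [dist_eq_norm] using (hnear t z hz).2.le) (mem_ball_self hr)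
    ((dist_seqEvalCLM_apply_le t p' p).trans_lt hdist)
  refine hmvt.trans (mul_le_mul_of_nonneg_left ?_ hc.le)
  simpa using norm_seqEvalCLM_apply_le t (p' - p)

theorem fderiv_nemytskii_apply (h : NemytskiiHypotheses G D U₁)
    (hp : p.2 ∈ lpInftyCompactlyIn U₁) (δ : C₀(ℕ, E) × ℓ^∞(ℕ, F)) (t : ℕ) :
    fderiv ℝ (nemytskii G) p δ t = D (p.1 t, p.2 t) (δ.1 t, δ.2 t) := by
  obtain ⟨L, hL⟩ := h.exists_continuousLinearMap_apply_eq hp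
  rw [(h.hasFDerivAt_nemytskii hp hL).fderiv, hL]

theorem continuousOn_fderiv_nemytskii (h : NemytskiiHypotheses G D U₁) :
    ContinuousOn (fderiv ℝ (nemytskii G)) (univ ×ˢ lpInftyCompactlyIn U₁) := by
  refine (Metric.continuousOn_iff (f := fderiv ℝ (nemytskii G))).2 fun p hp ε hε => ?_
  obtain ⟨r, hr, hnear⟩ :=
    exists_forall_dist_apply_lt h.isOpen h.continuousOn_deriv hp.2 (half_pos hε)
  refine ⟨r, hr, fun p' hp' hdist => ?_⟩
  refine (dist_eq_norm (fderiv ℝ (nemytskii G) p') _).trans_lt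
    (lt_of_le_of_lt ?_ (half_lt_self hε))
  refine ZeroAtInftyContinuousMap.opNorm_le_of_forall_norm_le
    (A := fun t => (D (p'.1 t, p'.2 t) - D (p.1 t, p.2 t)).comp (seqEvalCLM t))
    (fun δ t => ?_) (half_pos hε).le fun t => (norm_comp_seqEvalCLM_le _ t).trans ?_
  · simp [h.fderiv_nemytskii_apply hp'.2, h.fderiv_nemytskii_apply hp.2]
  · simpa [dist_eq_norm] using
      (hnear t _ ((dist_seqEvalCLM_apply_le t p' p).trans_lt hdist)).2.le

theorem differentiableAt_nemytskii (h : NemytskiiHypotheses G D U₁)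
    (hp : p.2 ∈ lpInftyCompactlyIn U₁) : DifferentiableAt ℝ (nemytskii G) p :=
  let ⟨_, hL⟩ := h.exists_continuousLinearMap_apply_eq hp
  (h.hasFDerivAt_nemytskii hp hL).differentiableAt

theorem contDiffOn_nemytskii (h : NemytskiiHypotheses G D U₁) :
    ContDiffOn ℝ 1 (nemytskii G) (univ ×ˢ lpInftyCompactlyIn U₁) := by
  rw [show (1 : WithTop ℕ∞) = 0 + 1 from rfl,
    contDiffOn_succ_iff_fderiv_of_isOpen (isOpen_univ.prod (isOpen_lpInftyCompactlyIn h.isOpen)),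
    contDiffOn_zero]
  exact ⟨fun p hp => (h.differentiableAt_nemytskii hp.2).differentiableWithinAt, by simp,
    h.continuousOn_fderiv_nemytskii⟩

end NemytskiiHypotheses

end Nemytskii

theorem StarConvex.apply_eq_of_hasFDerivAt_zero {F V : Type*} [NormedAddCommGroup F]
    [NormedSpace ℝ F] [NormedAddCommGroup V] [NormedSpace ℝ V] {g : F → V} {u₀ : F} {U : Set F}
    (hU : StarConvex ℝ u₀ U) (hg : ∀ v ∈ U, HasFDerivAt g (0 : F →L[ℝ] V) v) {v : F} (hv : v ∈ U) :
    g v = g u₀ := by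
  have := (convex_segment u₀ v).norm_image_sub_le_of_norm_hasFDerivWithin_le
    (f' := fun _ => (0 : F →L[ℝ] V)) (C := 0)
    (fun z hz => (hg z (hU.segment_subset hv hz)).hasFDerivWithinAt) (fun _ _ => by simp)
    (left_mem_segment ℝ u₀ v) (right_mem_segment ℝ u₀ v)
  simpa [sub_eq_zero] using this

theorem HasFDerivAt.apply_eq_fderiv_add_fderiv {E F V : Type*} [NormedAddCommGroup E]
    [NormedSpace ℝ E] [NormedAddCommGroup F] [NormedSpace ℝ F] [NormedAddCommGroup V]
    [NormedSpace ℝ V] {f : E → F → V} {L : E × F →L[ℝ] V} {x : E} {y : F}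
    (h : HasFDerivAt (fun q : E × F => f q.1 q.2) L (x, y)) (a : E) (b : F) :
    L (a, b) = fderiv ℝ (fun x' => f x' y) x a + fderiv ℝ (fun y' => f x y') y b := by
  have hx : HasFDerivAt (fun x' => f x' y) (L.comp (.inl ℝ E F)) x :=
    h.comp (f := fun x' => (x', y)) x (hasFDerivAt_prodMk_left x y)
  have hy : HasFDerivAt (fun y' => f x y') (L.comp (.inr ℝ E F)) y :=
    h.comp (f := fun y' => (x, y')) y (hasFDerivAt_prodMk_right x y)
  rw [hx.fderiv, hy.fderiv]
  exact (L.comp_inl_add_comp_inr (a, b)).symm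

theorem stmt_4_general {n d : ℕ}
    (U : Set (Fin d → ℝ)) (hUcl : IsClosed U)
    (f : (Fin n → ℝ) → (Fin d → ℝ) → (Fin n → ℝ))
    -- (i)
    (U1 : Set (Fin d → ℝ)) (hU1open : IsOpen U1) (hUU1 : U ⊆ U1)
    (hf : ContDiffOn ℝ 1 (fun q : (Fin n → ℝ) × (Fin d → ℝ) => f q.1 q.2) (Set.univ ×ˢ U1))
    -- (ii)
    (u0 : Fin d → ℝ) (hf0 : f 0 u0 = 0) (hstar : StarConvex ℝ u0 U)
    -- (iii)
    (hlim : ∀ B ⊆ U, B.Nonempty → IsBounded B →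
      ∀ ε > (0 : ℝ), ∃ δ > (0 : ℝ), ∀ x : Fin n → ℝ, ‖x‖ < δ → ∀ u ∈ B,
        ‖fderiv ℝ (fun q : (Fin n → ℝ) × (Fin d → ℝ) => f q.1 q.2) (x, u)‖ < ε) :
    ∃ O : Set (lp (fun _ : ℕ => Fin d → ℝ) ⊤), IsOpen O ∧
      {u : lp (fun _ : ℕ => Fin d → ℝ) ⊤ | ∀ t : ℕ, u t ∈ U} ⊆ O ∧
      ∃ T : C₀(ℕ, Fin n → ℝ) × lp (fun _ : ℕ => Fin d → ℝ) ⊤ → C₀(ℕ, Fin n → ℝ),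
        -- T is the operator 𝒯 on c₀(ℕ, ℝⁿ) × ℓ∞(ℕ, U)
        (∀ (x : C₀(ℕ, Fin n → ℝ)) (u : lp (fun _ : ℕ => Fin d → ℝ) ⊤),
          (∀ t : ℕ, u t ∈ U) → ∀ t : ℕ, T (x, u) t = x (t + 1) - f (x t) (u t)) ∧
        -- T is of class C¹
        ContDiffOn ℝ 1 T (Set.univ ×ˢ O) ∧
        -- formula for the differential
        (∀ (x : C₀(ℕ, Fin n → ℝ)) (u : lp (fun _ : ℕ => Fin d → ℝ) ⊤),
          (∀ t : ℕ, u t ∈ U) →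
          ∀ (δx : C₀(ℕ, Fin n → ℝ)) (δu : lp (fun _ : ℕ => Fin d → ℝ) ⊤), ∀ t : ℕ,
            fderiv ℝ T (x, u) (δx, δu) t
              = δx (t + 1) - fderiv ℝ (fun y => f y (u t)) (x t) (δx t)
                - fderiv ℝ (fun v => f (x t) v) (u t) (δu t)) := by
  set φ : (Fin n → ℝ) × (Fin d → ℝ) → (Fin n → ℝ) := fun q => f q.1 q.2
  have hφ : ∀ v ∈ U1, ∀ x, HasFDerivAt φ (fderiv ℝ φ (x, v)) (x, v) := fun v hv x =>
    ((hf.contDiffAt ((isOpen_univ.prod hU1open).mem_nhds ⟨trivial, hv⟩)).differentiableAt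
      one_ne_zero).hasFDerivAt
  have hφ0 : ∀ v ∈ U, fderiv ℝ φ (0, v) = 0 := fun v hv => by
    by_contra hne
    obtain ⟨δ, hδ, hb⟩ := hlim {v} (singleton_subset_iff.2 hv) (singleton_nonempty v)
      isBounded_singleton _ (norm_pos_iff.2 hne)
    exact lt_irrefl _ (hb 0 (by simpa using hδ) v rfl)
  have hf0U : ∀ v ∈ U, f 0 v = 0 := fun v hv => by
    refine (hstar.apply_eq_of_hasFDerivAt_zero (g := f 0) (fun w hw => ?_) hv).trans hf0
    have := (hφ w (hUU1 hw) 0).comp w (hasFDerivAt_prodMk_right (𝕜 := ℝ) 0 w)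
    rwa [hφ0 w hw, ContinuousLinearMap.zero_comp] at this
  have hN := NemytskiiHypotheses.of_contDiffOn hU1open hf
  have hmem := fun (u : lp (fun _ : ℕ => Fin d → ℝ) ⊤) (hu : ∀ t, u t ∈ U) =>
    mem_lpInftyCompactlyIn_of_forall_mem hUcl hUU1 hu
  set S := (ZeroAtInftyContinuousMap.shift (Fin n → ℝ)).comp
    (ContinuousLinearMap.fst ℝ _ (lp (fun _ : ℕ => Fin d → ℝ) ⊤))
  refine ⟨_, isOpen_lpInftyCompactlyIn hU1open, hmem, fun p => S p - nemytskii _ p,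
    fun x u hu t => ?_, S.contDiff.contDiffOn.sub hN.contDiffOn_nemytskii,
    fun x u hu δx δu t => ?_⟩
  · simp [S, hN.nemytskii_apply (p := (x, u)) (hmem u hu), ZeroAtInftyContinuousMap.shift_apply,
      φ, hf0U _ (hu t)]
  · rw [fderiv_fun_sub S.differentiableAt
      (hN.differentiableAt_nemytskii (p := (x, u)) (hmem u hu)), S.fderiv]
    simp [S, hN.fderiv_nemytskii_apply (p := (x, u)) (hmem u hu),
      ZeroAtInftyContinuousMap.shift_apply, hφ0 _ (hu t),
      (hφ _ (hUU1 (hu t)) _).apply_eq_fderiv_add_fderiv, sub_sub]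

/-- Corollary 3.8, smoothness of the dynamics operator.  Let `U ⊆ ℝᵈ`
be nonempty closed and `f : ℝⁿ × U → ℝⁿ` (a total function) satisfy (i) `f` is `C¹` on
`ℝⁿ × U` (i.e. `C¹` on `univ ×ˢ U₁` for an open `U₁ ⊇ U`); (ii) `f(0, u⁰) = 0` for some
`u⁰ ∈ U` w.r.t. which `U` is star-shaped; (iii) `lim_{x→0} sup_{u ∈ B} ‖Df(x,u)‖ = 0`
for every nonempty bounded `B ⊆ U`.  Then the operator
`𝒯(x, u) := (x_{t+1} − f(x_t, u_t))_t` is continuously Fréchet differentiable from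
`c₀(ℕ, ℝⁿ) × ℓ∞(ℕ, U)` into `c₀(ℕ, ℝⁿ)` — rendered as: there exist an open
`O ⊇ ℓ∞(ℕ, U)` and a `C¹` operator `T` on `c₀(ℕ, ℝⁿ) × O` agreeing with the formula on
`c₀(ℕ, ℝⁿ) × ℓ∞(ℕ, U)` — and on this domain
`D𝒯(x, u)(δx, δu) = (δx_{t+1} − D₁f(x_t, u_t) δx_t − D₂f(x_t, u_t) δu_t)_t`. -/
theorem stmt_4 {n d : ℕ}
    (U : Set (Fin d → ℝ)) (hUne : U.Nonempty) (hUcl : IsClosed U)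
    (f : (Fin n → ℝ) → (Fin d → ℝ) → (Fin n → ℝ))
    -- (i)
    (U1 : Set (Fin d → ℝ)) (hU1open : IsOpen U1) (hUU1 : U ⊆ U1)
    (hf : ContDiffOn ℝ 1 (fun q : (Fin n → ℝ) × (Fin d → ℝ) => f q.1 q.2) (Set.univ ×ˢ U1))
    -- (ii)
    (u0 : Fin d → ℝ) (hu0 : u0 ∈ U) (hf0 : f 0 u0 = 0) (hstar : StarConvex ℝ u0 U)
    -- (iii)
    (hlim : ∀ B ⊆ U, B.Nonempty → IsBounded B →
      ∀ ε > (0 : ℝ), ∃ δ > (0 : ℝ), ∀ x : Fin n → ℝ, ‖x‖ < δ → ∀ u ∈ B,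
        ‖fderiv ℝ (fun q : (Fin n → ℝ) × (Fin d → ℝ) => f q.1 q.2) (x, u)‖ < ε) :
    ∃ O : Set (lp (fun _ : ℕ => Fin d → ℝ) ⊤), IsOpen O ∧
      {u : lp (fun _ : ℕ => Fin d → ℝ) ⊤ | ∀ t : ℕ, u t ∈ U} ⊆ O ∧
      ∃ T : C₀(ℕ, Fin n → ℝ) × lp (fun _ : ℕ => Fin d → ℝ) ⊤ → C₀(ℕ, Fin n → ℝ),
        -- T is the operator 𝒯 on c₀(ℕ, ℝⁿ) × ℓ∞(ℕ, U)
        (∀ (x : C₀(ℕ, Fin n → ℝ)) (u : lp (fun _ : ℕ => Fin d → ℝ) ⊤),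
          (∀ t : ℕ, u t ∈ U) → ∀ t : ℕ, T (x, u) t = x (t + 1) - f (x t) (u t)) ∧
        -- T is of class C¹
        ContDiffOn ℝ 1 T (Set.univ ×ˢ O) ∧
        -- formula for the differential
        (∀ (x : C₀(ℕ, Fin n → ℝ)) (u : lp (fun _ : ℕ => Fin d → ℝ) ⊤),
          (∀ t : ℕ, u t ∈ U) →
          ∀ (δx : C₀(ℕ, Fin n → ℝ)) (δu : lp (fun _ : ℕ => Fin d → ℝ) ⊤), ∀ t : ℕ,
            fderiv ℝ T (x, u) (δx, δu) t
              = δx (t + 1) - fderiv ℝ (fun y => f y (u t)) (x t) (δx t)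
                - fderiv ℝ (fun v => f (x t) v) (u t) (δu t)) :=
  stmt_4_general U hUcl f U1 hU1open hUU1 hf u0 hf0 hstar hlim
end
end

section
/- Let 𝒳, 𝒱, 𝒲 be real Banach spaces and 𝒰 a nonempty subset of 𝒱. Let 𝒥 : 𝒳 × 𝒰 → ℝ and Γ : 𝒳 × 𝒰 → 𝒲 be of class C¹ on 𝒳 × 𝒰 (i.e. they admit C¹ extensions to 𝒳 × 𝒰₁ for some open set 𝒰₁ ⊇ 𝒰). Let (x̂, û) maximize 𝒥(x, u) over all (x, u) ∈ 𝒳 × 𝒰 with Γ(x, u) = 0. Assume that the partial Fréchet differential D₁Γ(x̂, û) : 𝒳 → 𝒲 is an invertible continuous linear map and that 𝒰 is star-shaped with respect to û. Then there exists a continuous linear functional M ∈ 𝒲* such that: (i) D₁𝒥(x̂, û) + M ∘ D₁Γ(x̂, û) = 0; (ii) for all u ∈ 𝒰, ⟨D₂𝒥(x̂, û) + M ∘ D₂Γ(x̂, û), u − û⟩ ≤ 0. -/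
/-!
Since `D₁Γ(x̂, û)` is invertible, the implicit function theorem solves the constraint
`Γ(x, u) = 0` near `(x̂, û)` as `x = ψ(u)`, with `Dψ(û) = -D₁Γ(x̂, û)⁻¹ ∘ D₂Γ(x̂, û)`.
The reduced objective `u ↦ 𝒥(ψ u, u)` then has a local maximum on `𝒰` at `û`, and its
derivative there is `D₂𝒥 + M ∘ D₂Γ` with `M = -D₁𝒥 ∘ D₁Γ⁻¹`, which also makes (i) hold.
Star-shapedness puts every `u - û` in the tangent cone of `𝒰` at `û`, so Fermat's rule
gives (ii).
-/

open Filter Topology Set ContinuousLinearMap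

section PartialDerivatives

variable {𝕜 : Type*} [NontriviallyNormedField 𝕜]
  {E F G : Type*} [NormedAddCommGroup E] [NormedSpace 𝕜 E] [NormedAddCommGroup F] [NormedSpace 𝕜 F]
  [NormedAddCommGroup G] [NormedSpace 𝕜 G] {f : E → F → G} {f' : E × F →L[𝕜] G} {x : E} {y : F}

theorem HasFDerivAt.fderiv_uncurry_left (hf : HasFDerivAt (fun q : E × F => f q.1 q.2) f' (x, y)) :
    fderiv 𝕜 (fun x => f x y) x = f' ∘L inl 𝕜 E F :=
  (hf.comp (f := fun x => (x, y)) x (hasFDerivAt_prodMk_left x y)).fderiv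

theorem HasFDerivAt.fderiv_uncurry_right (hf : HasFDerivAt (fun q : E × F => f q.1 q.2) f' (x, y)) :
    fderiv 𝕜 (fun y => f x y) y = f' ∘L inr 𝕜 E F :=
  (hf.comp (f := fun y => (x, y)) y (hasFDerivAt_prodMk_right x y)).fderiv

end PartialDerivatives

section ImplicitFunction

variable {𝕜 : Type*} [NontriviallyNormedField 𝕜]
  {E F G : Type*} [NormedAddCommGroup E] [NormedSpace 𝕜 E] [CompleteSpace E]
  [NormedAddCommGroup F] [NormedSpace 𝕜 F] [CompleteSpace F]
  [NormedAddCommGroup G] [NormedSpace 𝕜 G] [CompleteSpace G]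
  {Γ : E × F → G} {Γ' : E × F →L[𝕜] G} {x : E} {u : F}

theorem HasStrictFDerivAt.exists_implicitFunction_fst (hΓ : HasStrictFDerivAt Γ Γ' (x, u))
    (hinv : (Γ' ∘L inl 𝕜 E F).IsInvertible) :
    ∃ ψ : F → E, ψ u = x ∧
      HasStrictFDerivAt ψ (-(Γ' ∘L inl 𝕜 E F).inverse ∘L (Γ' ∘L inr 𝕜 E F)) u ∧
      ∀ᶠ v in 𝓝 u, Γ (ψ v, v) = Γ (x, u) := by
  -- Mathlib's implicit function solves for the second factor.
  let σ := ContinuousLinearEquiv.prodComm 𝕜 F E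
  have hΓσ : HasStrictFDerivAt (Γ ∘ σ) (Γ' ∘L (σ : F × E →L[𝕜] E × F)) (u, x) :=
    hΓ.comp (u, x) σ.hasStrictFDerivAt
  have hσinr : (Γ' ∘L (σ : F × E →L[𝕜] E × F)) ∘L inr 𝕜 F E = Γ' ∘L inl 𝕜 E F := by ext; simp [σ]
  have hσinl : (Γ' ∘L (σ : F × E →L[𝕜] E × F)) ∘L inl 𝕜 F E = Γ' ∘L inr 𝕜 E F := by ext; simp [σ]
  rw [← hσinr] at hinv
  refine ⟨hΓσ.implicitFunctionOfProdDomain hinv, ?_, ?_, ?_⟩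
  · exact (hΓσ.eventually_apply_eq_iff_implicitFunctionOfProdDomain hinv).self_of_nhds.mp rfl
  · simpa only [hσinr, hσinl] using hΓσ.hasStrictFDerivAt_implicitFunctionOfProdDomain hinv
  · exact hΓσ.eventually_apply_implicitFunctionOfProdDomain hinv

end ImplicitFunction

theorem IsLocalMaxOn.comp_implicitFunction {E F G β : Type*} [TopologicalSpace E]
    [TopologicalSpace F] [Preorder β] {J : E × F → β} {Γ : E × F → G} {U : Set F} {x : E} {u : F}
    {ψ : F → E} (hmax : IsLocalMaxOn J {q | q.2 ∈ U ∧ Γ q = Γ (x, u)} (x, u)) (hψu : ψ u = x)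
    (hψ : ContinuousAt ψ u) (hψΓ : ∀ᶠ v in 𝓝 u, Γ (ψ v, v) = Γ (x, u)) :
    IsLocalMaxOn (fun v => J (ψ v, v)) U u := by
  have hgraph : Tendsto (fun v => (ψ v, v)) (𝓝[U] u) (𝓝[{q | q.2 ∈ U ∧ Γ q = Γ (x, u)}] (x, u)) := by
    refine tendsto_nhdsWithin_iff.2 ⟨?_, ?_⟩
    · have := (hψ.prodMk continuousAt_id).tendsto
      rw [hψu] at this
      exact this.mono_left nhdsWithin_le_nhds
    · filter_upwards [self_mem_nhdsWithin, nhdsWithin_le_nhds hψΓ] with v hv hvΓ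
      exact ⟨hv, hvΓ⟩
  simpa only [IsLocalMaxOn, IsMaxFilter, hψu] using hgraph.eventually hmax

section LagrangeMultiplier

variable {𝕜 : Type*} [NontriviallyNormedField 𝕜]
  {E F G : Type*} [NormedAddCommGroup E] [NormedSpace 𝕜 E] [NormedAddCommGroup F] [NormedSpace 𝕜 F]
  [NormedAddCommGroup G] [NormedSpace 𝕜 G]

noncomputable def lagrangeMultiplier (J' : E × F →L[𝕜] 𝕜) (Γ' : E × F →L[𝕜] G) : G →L[𝕜] 𝕜 :=
  -(J' ∘L inl 𝕜 E F) ∘L (Γ' ∘L inl 𝕜 E F).inverse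

variable {J' : E × F →L[𝕜] 𝕜} {Γ' : E × F →L[𝕜] G}

theorem add_lagrangeMultiplier_comp_inl (hinv : (Γ' ∘L inl 𝕜 E F).IsInvertible) :
    J' ∘L inl 𝕜 E F + lagrangeMultiplier J' Γ' ∘L (Γ' ∘L inl 𝕜 E F) = 0 := by
  rw [lagrangeMultiplier, neg_comp, comp_assoc, hinv.inverse_comp_self, comp_id, add_neg_cancel]

theorem HasFDerivAt.comp_implicitFunction {J : E × F → 𝕜} {ψ : F → E} {x : E} {u : F}
    (hJ : HasFDerivAt J J' (x, u))
    (hψ : HasFDerivAt ψ (-(Γ' ∘L inl 𝕜 E F).inverse ∘L (Γ' ∘L inr 𝕜 E F)) u) (hψu : ψ u = x) :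
    HasFDerivAt (fun v => J (ψ v, v))
      (J' ∘L inr 𝕜 E F + lagrangeMultiplier J' Γ' ∘L (Γ' ∘L inr 𝕜 E F)) u := by
  have hgraph : HasFDerivAt (fun v => (ψ v, v))
      ((-(Γ' ∘L inl 𝕜 E F).inverse ∘L (Γ' ∘L inr 𝕜 E F)).prod (.id 𝕜 F)) u :=
    hψ.prodMk (hasFDerivAt_id u)
  rw [← hψu] at hJ
  refine (hJ.comp (f := fun v => (ψ v, v)) u hgraph).congr_fderiv ?_
  ext y
  rw [comp_apply, ← J'.comp_inl_add_comp_inr]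
  simp [lagrangeMultiplier, add_comm, ← map_neg J', Prod.neg_mk]

end LagrangeMultiplier

theorem IsLocalMaxOn.lagrangeMultiplier_nonpos {E F G : Type*}
    [NormedAddCommGroup E] [NormedSpace ℝ E] [CompleteSpace E]
    [NormedAddCommGroup F] [NormedSpace ℝ F] [CompleteSpace F]
    [NormedAddCommGroup G] [NormedSpace ℝ G] [CompleteSpace G]
    {J : E × F → ℝ} {Γ : E × F → G} {J' : E × F →L[ℝ] ℝ} {Γ' : E × F →L[ℝ] G} {U : Set F}
    {x : E} {u y : F} (hmax : IsLocalMaxOn J {q | q.2 ∈ U ∧ Γ q = Γ (x, u)} (x, u))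
    (hJ : HasFDerivAt J J' (x, u)) (hΓ : HasStrictFDerivAt Γ Γ' (x, u))
    (hinv : (Γ' ∘L inl ℝ E F).IsInvertible) (hy : y ∈ posTangentConeAt U u) :
    (J' ∘L inr ℝ E F) y + lagrangeMultiplier J' Γ' ((Γ' ∘L inr ℝ E F) y) ≤ 0 := by
  obtain ⟨ψ, hψu, hψ, hψΓ⟩ := hΓ.exists_implicitFunction_fst hinv
  exact (hmax.comp_implicitFunction hψu hψ.continuousAt hψΓ).hasFDerivWithinAt_nonpos
    (hJ.comp_implicitFunction hψ.hasFDerivAt hψu).hasFDerivWithinAt hy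

theorem stmt_10_general {𝒳 𝒱 𝒲 : Type*}
    [NormedAddCommGroup 𝒳] [NormedSpace ℝ 𝒳] [CompleteSpace 𝒳]
    [NormedAddCommGroup 𝒱] [NormedSpace ℝ 𝒱] [CompleteSpace 𝒱]
    [NormedAddCommGroup 𝒲] [NormedSpace ℝ 𝒲] [CompleteSpace 𝒲]
    (𝒰 : Set 𝒱)
    (𝒰₁ : Set 𝒱) (h𝒰₁open : IsOpen 𝒰₁) (h𝒰𝒰₁ : 𝒰 ⊆ 𝒰₁)
    (𝒥 : 𝒳 → 𝒱 → ℝ) (Γ : 𝒳 → 𝒱 → 𝒲)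
    (h𝒥 : ContDiffOn ℝ 1 (fun q : 𝒳 × 𝒱 => 𝒥 q.1 q.2) (Set.univ ×ˢ 𝒰₁))
    (hΓ : ContDiffOn ℝ 1 (fun q : 𝒳 × 𝒱 => Γ q.1 q.2) (Set.univ ×ˢ 𝒰₁))
    (xhat : 𝒳) (uhat : 𝒱) (huhat : uhat ∈ 𝒰) (hfeas : Γ xhat uhat = 0)
    (hmax : ∀ x : 𝒳, ∀ u ∈ 𝒰, Γ x u = 0 → 𝒥 x u ≤ 𝒥 xhat uhat)
    (hinv : ∃ e : 𝒳 ≃L[ℝ] 𝒲, (e : 𝒳 →L[ℝ] 𝒲) = fderiv ℝ (fun x => Γ x uhat) xhat)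
    (hstar : StarConvex ℝ uhat 𝒰) :
    ∃ M : 𝒲 →L[ℝ] ℝ,
      (fderiv ℝ (fun x => 𝒥 x uhat) xhat + M.comp (fderiv ℝ (fun x => Γ x uhat) xhat) = 0) ∧
      (∀ u ∈ 𝒰,
        fderiv ℝ (fun v => 𝒥 xhat v) uhat (u - uhat) + M (fderiv ℝ (fun v => Γ xhat v) uhat (u - uhat)) ≤ 0) := by
  have hp : univ ×ˢ 𝒰₁ ∈ 𝓝 (xhat, uhat) :=
    (isOpen_univ.prod h𝒰₁open).mem_nhds ⟨trivial, h𝒰𝒰₁ huhat⟩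
  have hJ := ((h𝒥.contDiffAt hp).hasStrictFDerivAt one_ne_zero).hasFDerivAt
  have hΓ := (hΓ.contDiffAt hp).hasStrictFDerivAt one_ne_zero
  have hinv : (fderiv ℝ (fun q : 𝒳 × 𝒱 => Γ q.1 q.2) (xhat, uhat) ∘L inl ℝ 𝒳 𝒱).IsInvertible := by
    rwa [← hΓ.hasFDerivAt.fderiv_uncurry_left]
  have hlocal : IsLocalMaxOn (fun q : 𝒳 × 𝒱 => 𝒥 q.1 q.2)
      {q | q.2 ∈ 𝒰 ∧ Γ q.1 q.2 = Γ xhat uhat} (xhat, uhat) :=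
    IsMaxOn.localize fun q hq => hmax q.1 q.2 hq.1 (hq.2.trans hfeas)
  rw [hJ.fderiv_uncurry_left, hJ.fderiv_uncurry_right, hΓ.hasFDerivAt.fderiv_uncurry_left,
    hΓ.hasFDerivAt.fderiv_uncurry_right]
  exact ⟨_, add_lagrangeMultiplier_comp_inl hinv, fun u hu => hlocal.lagrangeMultiplier_nonpos hJ hΓ
    hinv (sub_mem_posTangentConeAt_of_segment_subset (hstar.segment_subset hu))⟩

/-- Lemma 5.1, Karush–Kuhn–Tucker type multiplier rule. Let `𝒳, 𝒱, 𝒲`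
be real Banach spaces and `𝒰` a nonempty subset of `𝒱`.  Let `𝒥 : 𝒳 × 𝒰 → ℝ` and
`Γ : 𝒳 × 𝒰 → 𝒲` be of class `C¹` on `𝒳 × 𝒰` (here: total functions which are `C¹` on
`univ ×ˢ 𝒰₁` for an open `𝒰₁ ⊇ 𝒰`; such functions are their own `C¹` extensions).
Let `(xhat, uhat)` maximize `𝒥` subject to `Γ(x, u) = 0`, `u ∈ 𝒰`.  Assume `D₁Γ(xhat, uhat)` is an
invertible continuous linear map and `𝒰` is star-shaped with respect to `uhat`.  Then there
is `M ∈ 𝒲*` with (i) `D₁𝒥(xhat, uhat) + M ∘ D₁Γ(xhat, uhat) = 0` and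
(ii) `⟨D₂𝒥(xhat, uhat) + M ∘ D₂Γ(xhat, uhat), u − uhat⟩ ≤ 0` for all `u ∈ 𝒰`. -/
theorem stmt_10 {𝒳 𝒱 𝒲 : Type*}
    [NormedAddCommGroup 𝒳] [NormedSpace ℝ 𝒳] [CompleteSpace 𝒳]
    [NormedAddCommGroup 𝒱] [NormedSpace ℝ 𝒱] [CompleteSpace 𝒱]
    [NormedAddCommGroup 𝒲] [NormedSpace ℝ 𝒲] [CompleteSpace 𝒲]
    (𝒰 : Set 𝒱) (h𝒰 : 𝒰.Nonempty)
    (𝒰₁ : Set 𝒱) (h𝒰₁open : IsOpen 𝒰₁) (h𝒰𝒰₁ : 𝒰 ⊆ 𝒰₁)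
    (𝒥 : 𝒳 → 𝒱 → ℝ) (Γ : 𝒳 → 𝒱 → 𝒲)
    (h𝒥 : ContDiffOn ℝ 1 (fun q : 𝒳 × 𝒱 => 𝒥 q.1 q.2) (Set.univ ×ˢ 𝒰₁))
    (hΓ : ContDiffOn ℝ 1 (fun q : 𝒳 × 𝒱 => Γ q.1 q.2) (Set.univ ×ˢ 𝒰₁))
    (xhat : 𝒳) (uhat : 𝒱) (huhat : uhat ∈ 𝒰) (hfeas : Γ xhat uhat = 0)
    (hmax : ∀ x : 𝒳, ∀ u ∈ 𝒰, Γ x u = 0 → 𝒥 x u ≤ 𝒥 xhat uhat)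
    (hinv : ∃ e : 𝒳 ≃L[ℝ] 𝒲, (e : 𝒳 →L[ℝ] 𝒲) = fderiv ℝ (fun x => Γ x uhat) xhat)
    (hstar : StarConvex ℝ uhat 𝒰) :
    ∃ M : 𝒲 →L[ℝ] ℝ,
      (fderiv ℝ (fun x => 𝒥 x uhat) xhat + M.comp (fderiv ℝ (fun x => Γ x uhat) xhat) = 0) ∧
      (∀ u ∈ 𝒰,
        fderiv ℝ (fun v => 𝒥 xhat v) uhat (u - uhat) + M (fderiv ℝ (fun v => Γ xhat v) uhat (u - uhat)) ≤ 0) :=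
  stmt_10_general 𝒰 𝒰₁ h𝒰₁open h𝒰𝒰₁ 𝒥 Γ h𝒥 hΓ xhat uhat huhat hfeas hmax hinv hstar
end

section
/- Let U be a nonempty convex subset of ℝᵈ, β ∈ (0,1), σ ∈ ℝⁿ, φ : ℝⁿ × U → ℝ and f : ℝⁿ × U → ℝⁿ. Let (x̂, û) ∈ c₀(ℕ, ℝⁿ) × ℓ∞(ℕ, U) and p ∈ ℓ¹(ℕ*, ℝⁿ*) satisfy: (i) x̂_{t+1} = f(x̂_t, û_t) for all t ∈ ℕ and x̂₀ = σ; (ii) φ and f are of class C¹ on ℝⁿ × U; (iii) φ maps bounded subsets of ℝⁿ × U into bounded subsets of ℝ; (iv) p_t = p_{t+1} ∘ D₁f(x̂_t, û_t) + βᵗ D₁φ(x̂_t, û_t) for all t ≥ 1; (v) ⟨p_{t+1} ∘ D₂f(x̂_t, û_t) + βᵗ D₂φ(x̂_t, û_t), u − û_t⟩ ≤ 0 for all u ∈ U and all t ∈ ℕ; (vi) for each t ∈ ℕ the function (x, u) ↦ ⟨p_{t+1}, f(x, u)⟩ + βᵗ φ(x, u) is concave on ℝⁿ × U. Then (x̂,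 û) is a solution of problem (P1): it maximizes Σ_{t=0}^{∞} βᵗ φ(x_t, u_t) over all x ∈ c₀(ℕ, ℝⁿ), u ∈ ℓ∞(ℕ, U) with x₀ = σ and x_{t+1} = f(x_t, u_t) for all t ∈ ℕ. -/
open Filter Topology Bornology Set

/-!
Along any admissible pair `(x, u)`, concavity of the Hamiltonian
`Hₜ(x, u) = pₜ₊₁(f(x, u)) + βᵗ φ(x, u)` together with the adjoint equation (iv) and the weak
maximum principle (v) gives
`βᵗ (φ(xₜ, uₜ) - φ(x̂ₜ, ûₜ)) ≤ aₜ - aₜ₊₁` with `aₜ = pₜ(xₜ - x̂ₜ)`.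
Summing telescopes: `a₀ = 0` since both trajectories start at `σ`, and `aₜ → 0` since `‖pₜ‖ → 0`
while the trajectories are bounded.  Condition (iii) makes both payoff series summable.
-/

theorem ConcaveOn.le_add_of_hasFDerivAt {E : Type*} [NormedAddCommGroup E] [NormedSpace ℝ E]
    {s : Set E} {g : E → ℝ} {g' : E →L[ℝ] ℝ} {a y : E}
    (hg : ConcaveOn ℝ s g) (ha : a ∈ s) (hy : y ∈ s) (hd : HasFDerivAt g g' a) :
    g y ≤ g a + g' (y - a) := by
  let ℓ : ℝ →ᵃ[ℝ] E := AffineMap.lineMap a y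
  have hℓ : HasDerivAt (g ∘ ℓ) (g' (y - a)) 0 := by
    refine HasFDerivAt.comp_hasDerivAt (0 : ℝ) ?_ AffineMap.hasDerivAt_lineMap
    simpa [ℓ] using hd
  have hslope := (hg.comp_affineMap ℓ).slope_le_of_hasDerivAt
    (by simpa [ℓ] using ha) (by simpa [ℓ] using hy) zero_lt_one hℓ
  simp only [slope, sub_zero, inv_one, vsub_eq_sub, Function.comp_apply, ℓ,
    AffineMap.lineMap_apply_one, AffineMap.lineMap_apply_zero, smul_eq_mul, one_mul] at hslope
  linarith

theorem DifferentiableAt.hasFDerivAt_uncurry_coprod {E V W : Type*}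
    [NormedAddCommGroup E] [NormedSpace ℝ E] [NormedAddCommGroup V] [NormedSpace ℝ V]
    [NormedAddCommGroup W] [NormedSpace ℝ W] {F : E → V → W} {a : E} {b : V}
    (h : DifferentiableAt ℝ (fun z : E × V => F z.1 z.2) (a, b)) :
    HasFDerivAt (fun z : E × V => F z.1 z.2)
      ((fderiv ℝ (fun x => F x b) a).coprod (fderiv ℝ (fun v => F a v) b)) (a, b) := by
  have h₁ : fderiv ℝ (fun x => F x b) a
      = (fderiv ℝ (fun z : E × V => F z.1 z.2) (a, b)).comp (.inl ℝ E V) :=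
    (h.hasFDerivAt.comp (f := fun x => (x, b)) a (hasFDerivAt_prodMk_left a b)).fderiv
  have h₂ : fderiv ℝ (fun v => F a v) b
      = (fderiv ℝ (fun z : E × V => F z.1 z.2) (a, b)).comp (.inr ℝ E V) :=
    (h.hasFDerivAt.comp (f := fun v => (a, v)) b (hasFDerivAt_prodMk_right a b)).fderiv
  rw [h₁, h₂, ContinuousLinearMap.coprod_comp_inl_inr]
  exact h.hasFDerivAt

theorem tendsto_apply_zero_of_isBounded_range {ι 𝕜 E F : Type*} [NontriviallyNormedField 𝕜]
    [NormedAddCommGroup E] [NormedSpace 𝕜 E] [NormedAddCommGroup F] [NormedSpace 𝕜 F]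
    {l : Filter ι} {p : ι → E →L[𝕜] F} {y : ι → E}
    (hp : Tendsto (fun i => ‖p i‖) l (𝓝 0)) (hy : IsBounded (range y)) :
    Tendsto (fun i => p i (y i)) l (𝓝 0) := by
  obtain ⟨C, hC⟩ := isBounded_iff_forall_norm_le.1 hy
  have hyC : IsBoundedUnder (· ≤ ·) l (norm ∘ fun i => ‖y i‖) :=
    isBoundedUnder_of ⟨C, fun i => by simpa using hC _ ⟨i, rfl⟩⟩
  exact squeeze_zero_norm (fun i => (p i).le_opNorm (y i)) (hp.zero_mul_isBoundedUnder_le hyC)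

theorem summable_pow_mul_of_isBounded_range {β : ℝ} (h₀ : 0 ≤ β) (h₁ : β < 1) {g : ℕ → ℝ}
    (hg : IsBounded (range g)) : Summable fun t => β ^ t * g t := by
  obtain ⟨M, hM⟩ := isBounded_iff_forall_norm_le.1 hg
  refine Summable.of_norm_bounded ((summable_geometric_of_lt_one h₀ h₁).mul_right M) fun t => ?_
  rw [norm_mul, norm_pow, Real.norm_of_nonneg h₀]
  exact mul_le_mul_of_nonneg_left (hM _ ⟨t, rfl⟩) (by positivity)

theorem summable_pow_mul_of_isBounded_orbit {E V : Type*} [PseudoMetricSpace E]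
    [PseudoMetricSpace V] {U : Set V} {φ : E → V → ℝ} {β : ℝ} (h₀ : 0 ≤ β) (h₁ : β < 1)
    (hφ : ∀ s ⊆ univ ×ˢ U, IsBounded s → IsBounded ((fun z : E × V => φ z.1 z.2) '' s))
    {x : ℕ → E} {u : ℕ → V} (hx : IsBounded (range x)) (hu : ∀ t, u t ∈ U)
    (hub : IsBounded (range u)) : Summable fun t => β ^ t * φ (x t) (u t) := by
  refine summable_pow_mul_of_isBounded_range h₀ h₁ ?_
  have hbdd := hφ (range fun t => (x t, u t)) (range_subset_iff.2 fun t => ⟨trivial, hu t⟩)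
    ((hx.prod hub).subset (range_subset_iff.2 fun t => ⟨mem_range_self t, mem_range_self t⟩))
  rwa [← range_comp] at hbdd

theorem tsum_sub_tsum_le_of_sub_le_sub_succ {A B a : ℕ → ℝ} (hA : Summable A) (hB : Summable B)
    (ha : Tendsto a atTop (𝓝 0)) (h : ∀ t, A t - B t ≤ a t - a (t + 1)) :
    ∑' t, A t - ∑' t, B t ≤ a 0 := by
  have hsum : Tendsto (fun T => ∑ t ∈ Finset.range T, (A t - B t)) atTop
      (𝓝 (∑' t, A t - ∑' t, B t)) := by
    simpa only [Finset.sum_sub_distrib] using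
      hA.hasSum.tendsto_sum_nat.sub hB.hasSum.tendsto_sum_nat
  have hbound (T : ℕ) : ∑ t ∈ Finset.range T, (A t - B t) ≤ a 0 - a T :=
    (Finset.sum_le_sum fun t _ => h t).trans_eq (Finset.sum_range_sub' a T)
  simpa using le_of_tendsto_of_tendsto' hsum (tendsto_const_nhds.sub ha) hbound

theorem hamiltonian_le_add_costate {E V : Type*}
    [NormedAddCommGroup E] [NormedSpace ℝ E] [NormedAddCommGroup V] [NormedSpace ℝ V]
    {U : Set V} {f : E → V → E} {φ : E → V → ℝ} {q q' : E →L[ℝ] ℝ} {c : ℝ}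
    {x₀ x : E} {u₀ u : V}
    (hf : DifferentiableAt ℝ (fun z : E × V => f z.1 z.2) (x₀, u₀))
    (hφ : DifferentiableAt ℝ (fun z : E × V => φ z.1 z.2) (x₀, u₀))
    (hconc : ConcaveOn ℝ (univ ×ˢ U) fun z : E × V => q' (f z.1 z.2) + c * φ z.1 z.2)
    (hu₀ : u₀ ∈ U) (hu : u ∈ U)
    (hadj : q' (fderiv ℝ (fun y => f y u₀) x₀ (x - x₀))
      + c * fderiv ℝ (fun y => φ y u₀) x₀ (x - x₀) = q (x - x₀))
    (hmax : q' (fderiv ℝ (fun v => f x₀ v) u₀ (u - u₀))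
      + c * fderiv ℝ (fun v => φ x₀ v) u₀ (u - u₀) ≤ 0) :
    q' (f x u) + c * φ x u ≤ q' (f x₀ u₀) + c * φ x₀ u₀ + q (x - x₀) := by
  have hH := (q'.hasFDerivAt.comp (x₀, u₀) hf.hasFDerivAt_uncurry_coprod).add
    (hφ.hasFDerivAt_uncurry_coprod.const_mul c)
  have hle := hconc.le_add_of_hasFDerivAt (y := (x, u)) ⟨trivial, hu₀⟩ ⟨trivial, hu⟩ hH
  simp only [Prod.mk_sub_mk, add_apply, ContinuousLinearMap.comp_apply,
    smul_apply, ContinuousLinearMap.coprod_apply, map_add, smul_eq_mul] at hle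
  linarith

theorem stmt_17_general {n d : ℕ}
    (U : Set (Fin d → ℝ))
    (β : ℝ) (hβ : 0 < β ∧ β < 1) (σ : Fin n → ℝ)
    (φ : (Fin n → ℝ) → (Fin d → ℝ) → ℝ)
    (f : (Fin n → ℝ) → (Fin d → ℝ) → (Fin n → ℝ))
    (xhat : ℕ → (Fin n → ℝ)) (uhat : ℕ → (Fin d → ℝ))
    (hxhat0 : Tendsto xhat atTop (𝓝 0))
    (huhatU : ∀ t, uhat t ∈ U) (huhatbd : IsBounded (Set.range uhat))
    (p : ℕ → ((Fin n → ℝ) →L[ℝ] ℝ)) (hp : Summable fun t => ‖p t‖)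
    -- (i)
    (hinit : xhat 0 = σ) (hdyn : ∀ t : ℕ, xhat (t + 1) = f (xhat t) (uhat t))
    -- (ii): φ, f of class C¹ on ℝⁿ × U
    (U1 : Set (Fin d → ℝ)) (hU1open : IsOpen U1) (hUU1 : U ⊆ U1)
    (hφ : ContDiffOn ℝ 1 (fun q : (Fin n → ℝ) × (Fin d → ℝ) => φ q.1 q.2) (Set.univ ×ˢ U1))
    (hf : ContDiffOn ℝ 1 (fun q : (Fin n → ℝ) × (Fin d → ℝ) => f q.1 q.2) (Set.univ ×ˢ U1))
    -- (iii): φ maps bounded subsets of ℝⁿ × U into bounded subsets of ℝ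
    (hφbdd : ∀ s : Set ((Fin n → ℝ) × (Fin d → ℝ)), s ⊆ Set.univ ×ˢ U → IsBounded s →
      IsBounded ((fun q : (Fin n → ℝ) × (Fin d → ℝ) => φ q.1 q.2) '' s))
    -- (iv): adjoint equation
    (hAE : ∀ t : ℕ, 1 ≤ t →
      p t = (p (t + 1)).comp (fderiv ℝ (fun x => f x (uhat t)) (xhat t))
        + β ^ t • fderiv ℝ (fun x => φ x (uhat t)) (xhat t))
    -- (v): weak maximum principle
    (hWM : ∀ t : ℕ, ∀ u ∈ U,
      (p (t + 1)) (fderiv ℝ (fun v => f (xhat t) v) (uhat t) (u - uhat t))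
        + β ^ t * (fderiv ℝ (fun v => φ (xhat t) v) (uhat t) (u - uhat t)) ≤ 0)
    -- (vi): concavity of the Hamiltonian
    (hconc : ∀ t : ℕ, ConcaveOn ℝ (Set.univ ×ˢ U)
      (fun q : (Fin n → ℝ) × (Fin d → ℝ) => (p (t + 1)) (f q.1 q.2) + β ^ t * φ q.1 q.2)) :
    -- conclusion: (x̂, û) solves (P1)
    ∀ (x : ℕ → (Fin n → ℝ)) (u : ℕ → (Fin d → ℝ)),
      Tendsto x atTop (𝓝 0) → (∀ t, u t ∈ U) → IsBounded (Set.range u) →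
      x 0 = σ → (∀ t : ℕ, x (t + 1) = f (x t) (u t)) →
      (∑' t : ℕ, β ^ t * φ (x t) (u t)) ≤ ∑' t : ℕ, β ^ t * φ (xhat t) (uhat t) := by
  intro x u hx huU hub hx0 hxdyn
  have hstep (t : ℕ) : β ^ t * φ (x t) (u t) - β ^ t * φ (xhat t) (uhat t)
      ≤ p t (x t - xhat t) - p (t + 1) (x (t + 1) - xhat (t + 1)) := by
    have hnhds : univ ×ˢ U1 ∈ 𝓝 (xhat t, uhat t) :=
      (isOpen_univ.prod hU1open).mem_nhds ⟨trivial, hUU1 (huhatU t)⟩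
    have hadj : p (t + 1) (fderiv ℝ (fun y => f y (uhat t)) (xhat t) (x t - xhat t))
        + β ^ t * fderiv ℝ (fun y => φ y (uhat t)) (xhat t) (x t - xhat t)
        = p t (x t - xhat t) := by
      rcases Nat.eq_zero_or_pos t with rfl | ht
      · simp [hx0, hinit]
      · simp [hAE t ht]
    have hH := hamiltonian_le_add_costate ((hf.contDiffAt hnhds).differentiableAt one_ne_zero)
      ((hφ.contDiffAt hnhds).differentiableAt one_ne_zero) (hconc t) (huhatU t) (huU t) hadj
      (hWM t (u t) (huU t))
    rw [hdyn, hxdyn, (p (t + 1)).map_sub]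
    linarith
  have hcostate : Tendsto (fun t => p t (x t - xhat t)) atTop (𝓝 0) :=
    tendsto_apply_zero_of_isBounded_range hp.tendsto_atTop_zero
      (Metric.isBounded_range_of_tendsto _ (by simpa using hx.sub hxhat0))
  have hsum := tsum_sub_tsum_le_of_sub_le_sub_succ
    (summable_pow_mul_of_isBounded_orbit hβ.1.le hβ.2 hφbdd
      (Metric.isBounded_range_of_tendsto x hx) huU hub)
    (summable_pow_mul_of_isBounded_orbit hβ.1.le hβ.2 hφbdd
      (Metric.isBounded_range_of_tendsto xhat hxhat0) huhatU huhatbd) hcostate hstep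
  simp only [hx0, hinit, sub_self, map_zero] at hsum
  linarith

/-- Theorem 10.1, sufficient conditions for (P1).  Let `U ⊆ ℝᵈ` be
nonempty convex, `β ∈ (0,1)`, `σ ∈ ℝⁿ`, and `(x̂, û) ∈ c₀(ℕ, ℝⁿ) × ℓ∞(ℕ, U)`,
`p ∈ ℓ¹(ℕ*, ℝⁿ*)` satisfy (i)–(vi).  Then `(x̂, û)` solves (P1).  `φ` and `f` are total
functions; "of class `C¹` on `ℝⁿ × U`" is rendered by `C¹` on `univ ×ˢ U₁` for an open
`U₁ ⊇ U`. -/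
theorem stmt_17 {n d : ℕ}
    (U : Set (Fin d → ℝ)) (hUne : U.Nonempty) (hUconv : Convex ℝ U)
    (β : ℝ) (hβ : 0 < β ∧ β < 1) (σ : Fin n → ℝ)
    (φ : (Fin n → ℝ) → (Fin d → ℝ) → ℝ)
    (f : (Fin n → ℝ) → (Fin d → ℝ) → (Fin n → ℝ))
    (xhat : ℕ → (Fin n → ℝ)) (uhat : ℕ → (Fin d → ℝ))
    (hxhat0 : Tendsto xhat atTop (𝓝 0))
    (huhatU : ∀ t, uhat t ∈ U) (huhatbd : IsBounded (Set.range uhat))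
    (p : ℕ → ((Fin n → ℝ) →L[ℝ] ℝ)) (hp : Summable fun t => ‖p t‖)
    -- (i)
    (hinit : xhat 0 = σ) (hdyn : ∀ t : ℕ, xhat (t + 1) = f (xhat t) (uhat t))
    -- (ii): φ, f of class C¹ on ℝⁿ × U
    (U1 : Set (Fin d → ℝ)) (hU1open : IsOpen U1) (hUU1 : U ⊆ U1)
    (hφ : ContDiffOn ℝ 1 (fun q : (Fin n → ℝ) × (Fin d → ℝ) => φ q.1 q.2) (Set.univ ×ˢ U1))
    (hf : ContDiffOn ℝ 1 (fun q : (Fin n → ℝ) × (Fin d → ℝ) => f q.1 q.2) (Set.univ ×ˢ U1))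
    -- (iii): φ maps bounded subsets of ℝⁿ × U into bounded subsets of ℝ
    (hφbdd : ∀ s : Set ((Fin n → ℝ) × (Fin d → ℝ)), s ⊆ Set.univ ×ˢ U → IsBounded s →
      IsBounded ((fun q : (Fin n → ℝ) × (Fin d → ℝ) => φ q.1 q.2) '' s))
    -- (iv): adjoint equation
    (hAE : ∀ t : ℕ, 1 ≤ t →
      p t = (p (t + 1)).comp (fderiv ℝ (fun x => f x (uhat t)) (xhat t))
        + β ^ t • fderiv ℝ (fun x => φ x (uhat t)) (xhat t))
    -- (v): weak maximum principle
    (hWM : ∀ t : ℕ, ∀ u ∈ U,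
      (p (t + 1)) (fderiv ℝ (fun v => f (xhat t) v) (uhat t) (u - uhat t))
        + β ^ t * (fderiv ℝ (fun v => φ (xhat t) v) (uhat t) (u - uhat t)) ≤ 0)
    -- (vi): concavity of the Hamiltonian
    (hconc : ∀ t : ℕ, ConcaveOn ℝ (Set.univ ×ˢ U)
      (fun q : (Fin n → ℝ) × (Fin d → ℝ) => (p (t + 1)) (f q.1 q.2) + β ^ t * φ q.1 q.2)) :
    -- conclusion: (x̂, û) solves (P1)
    ∀ (x : ℕ → (Fin n → ℝ)) (u : ℕ → (Fin d → ℝ)),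
      Tendsto x atTop (𝓝 0) → (∀ t, u t ∈ U) → IsBounded (Set.range u) →
      x 0 = σ → (∀ t : ℕ, x (t + 1) = f (x t) (u t)) →
      (∑' t : ℕ, β ^ t * φ (x t) (u t)) ≤ ∑' t : ℕ, β ^ t * φ (xhat t) (uhat t) :=
  stmt_17_general U β hβ σ φ f xhat uhat hxhat0 huhatU huhatbd p hp hinit hdyn U1 hU1open hUU1 hφ hf
    hφbdd hAE hWM hconc
end

section
/- Under the hypotheses of the sufficiency theorem for (P1) — U a nonempty convex subset of ℝᵈ, β ∈ (0,1), σ ∈ ℝⁿ, (x̂, û) ∈ c₀(ℕ, ℝⁿ) × ℓ∞(ℕ, U) and p ∈ ℓ¹(ℕ*, ℝⁿ*) satisfying: (i) x̂_{t+1} = f(x̂_t, û_t) for all t ∈ ℕ and x̂₀ = σ; (ii) φ and f of class C¹ on ℝⁿ × U; (iii) φ maps bounded subsets of ℝⁿ × U into bounded subsets of ℝ; (iv) p_t = p_{t+1} ∘ D₁f(x̂_t, û_t) + βᵗ D₁φ(x̂_t, û_t) for all t ≥ 1; (v) ⟨p_{t+1} ∘ D₂f(x̂_t, û_t) + βᵗ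 D₂φ(x̂_t, û_t), u − û_t⟩ ≤ 0 for all u ∈ U, t ∈ ℕ; (vi) (x, u) ↦ ⟨p_{t+1}, f(x, u)⟩ + βᵗ φ(x, u) concave on ℝⁿ × U for all t ∈ ℕ — the process (x̂, û) is also a solution of the problem: maximize Σ_{t=0}^{∞} βᵗ φ(x_t, u_t) over all BOUNDED sequences x ∈ ℓ∞(ℕ, ℝⁿ) and u ∈ ℓ∞(ℕ, U) with x₀ = σ and x_{t+1} = f(x_t, u_t) for all t ∈ ℕ. -/
open Filter Topology Bornology Set

/-!
Concavity of the Hamiltonian `H_t(x, u) = p_{t+1}(f(x, u)) + βᵗ φ(x, u)` at `(x̂_t, û_t)`, combined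
with the adjoint equation for its `x`-derivative and the weak maximum principle for its
`u`-derivative, gives the one-period estimate
`βᵗ (φ(x_t, u_t) - φ(x̂_t, û_t)) ≤ p_t(x_t - x̂_t) - p_{t+1}(x_{t+1} - x̂_{t+1})`.
The sum telescopes, and the boundary term `p_T(x_T - x̂_T)` tends to `0` because `‖p_T‖ → 0`
while `x - x̂` stays bounded; this is where boundedness of the competing process enters.
-/

theorem ConcaveOn.le_add_fderiv {E : Type*} [NormedAddCommGroup E] [NormedSpace ℝ E]
    {s : Set E} {g : E → ℝ} {g' : E →L[ℝ] ℝ} {x y : E} (hg : ConcaveOn ℝ s g) (hx : x ∈ s)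
    (hy : y ∈ s) (hd : HasFDerivAt g g' x) : g y ≤ g x + g' (y - x) := by
  have hline := hg.comp_affineMap (AffineMap.lineMap x y)
  have hderiv : HasDerivAt (g ∘ AffineMap.lineMap x y) (g' (y - x)) (0 : ℝ) := by
    refine HasFDerivAt.comp_hasDerivAt (0 : ℝ) ?_ AffineMap.hasDerivAt_lineMap
    simpa using hd
  have hslope := hline.slope_le_of_hasDerivAt (x := 0) (y := 1) (by simpa) (by simpa) one_pos hderiv
  simp only [slope, Function.comp_apply, AffineMap.lineMap_apply_zero, AffineMap.lineMap_apply_one,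
    sub_zero, vsub_eq_sub, inv_one, one_smul] at hslope
  linarith

theorem fderiv_uncurry_apply {𝕜 E V G : Type*} [NontriviallyNormedField 𝕜]
    [NormedAddCommGroup E] [NormedSpace 𝕜 E] [NormedAddCommGroup V] [NormedSpace 𝕜 V]
    [NormedAddCommGroup G] [NormedSpace 𝕜 G] {f : E → V → G} {a : E} {b : V}
    (h : DifferentiableAt 𝕜 (fun q : E × V => f q.1 q.2) (a, b)) (v : E × V) :
    fderiv 𝕜 (fun q : E × V => f q.1 q.2) (a, b) v
      = fderiv 𝕜 (fun x => f x b) a v.1 + fderiv 𝕜 (fun y => f a y) b v.2 := by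
  have h₁ := (h.hasFDerivAt.comp a (hasFDerivAt_prodMk_left (𝕜 := 𝕜) a b)).fderiv
  have h₂ := (h.hasFDerivAt.comp b (hasFDerivAt_prodMk_right (𝕜 := 𝕜) a b)).fderiv
  simp only [Function.comp_def] at h₁ h₂
  rw [h₁, h₂, ContinuousLinearMap.comp_apply, ContinuousLinearMap.comp_apply, ← map_add]
  simp

theorem tsum_le_of_le_sub_succ {a g : ℕ → ℝ} (ha : Summable a)
    (hg : Tendsto g atTop (𝓝 0)) (h : ∀ t, a t ≤ g t - g (t + 1)) : ∑' t, a t ≤ g 0 := by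
  refine le_of_tendsto_of_tendsto' ha.hasSum.tendsto_sum_nat
    (by simpa using tendsto_const_nhds.sub hg) fun T => ?_
  exact (Finset.sum_le_sum fun t _ => h t).trans_eq (Finset.sum_range_sub' g T)

theorem tendsto_apply_zero_of_isBounded {ι 𝕜 E F : Type*} [NontriviallyNormedField 𝕜]
    [SeminormedAddCommGroup E] [NormedSpace 𝕜 E] [SeminormedAddCommGroup F] [NormedSpace 𝕜 F]
    {l : Filter ι} {p : ι → E →L[𝕜] F} {z : ι → E} (hp : Tendsto (fun i => ‖p i‖) l (𝓝 0))
    (hz : IsBounded (range z)) : Tendsto (fun i => p i (z i)) l (𝓝 0) := by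
  obtain ⟨C, hC⟩ := isBounded_iff_forall_norm_le.mp hz
  refine squeeze_zero_norm (fun i => (p i).le_opNorm_of_le (hC _ ⟨i, rfl⟩)) ?_
  simpa using hp.mul_const C

theorem summable_pow_mul_of_isBounded {β : ℝ} (hβ₀ : 0 ≤ β) (hβ₁ : β < 1) {c : ℕ → ℝ}
    (hc : IsBounded (range c)) : Summable fun t => β ^ t * c t := by
  obtain ⟨C, hC⟩ := isBounded_iff_forall_norm_le.mp hc
  refine Summable.of_norm_bounded ((summable_geometric_of_lt_one hβ₀ hβ₁).mul_right C) fun t => ?_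
  rw [norm_mul, norm_pow, Real.norm_of_nonneg hβ₀]
  exact mul_le_mul_of_nonneg_left (hC _ ⟨t, rfl⟩) (pow_nonneg hβ₀ t)

theorem isBounded_range_of_isBounded_image {α β γ : Type*} [Bornology α] [Bornology β]
    [Bornology γ] {φ : α → β → γ} {S : Set β}
    (hφ : ∀ s ⊆ univ ×ˢ S, IsBounded s → IsBounded ((fun q : α × β => φ q.1 q.2) '' s))
    {y : ℕ → α} {v : ℕ → β} (hy : IsBounded (range y)) (hvS : ∀ t, v t ∈ S)
    (hv : IsBounded (range v)) : IsBounded (range fun t => φ (y t) (v t)) := by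
  have hsub : range (fun t => (y t, v t)) ⊆ range y ×ˢ range v := by
    rintro _ ⟨t, rfl⟩; exact ⟨⟨t, rfl⟩, ⟨t, rfl⟩⟩
  have himage := hφ _ (by rintro _ ⟨t, rfl⟩; exact ⟨mem_univ _, hvS t⟩) ((hy.prod hv).subset hsub)
  rwa [← range_comp] at himage

theorem hamiltonian_le_add_fderiv {E V W : Type*} [NormedAddCommGroup E] [NormedSpace ℝ E]
    [NormedAddCommGroup V] [NormedSpace ℝ V] [NormedAddCommGroup W] [NormedSpace ℝ W]
    {f : E → V → W} {φ : E → V → ℝ} {U : Set V} {π : W →L[ℝ] ℝ} {c : ℝ} {a x : E} {b u : V}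
    (hf : DifferentiableAt ℝ (fun q : E × V => f q.1 q.2) (a, b))
    (hφ : DifferentiableAt ℝ (fun q : E × V => φ q.1 q.2) (a, b))
    (hconc : ConcaveOn ℝ (univ ×ˢ U) fun q : E × V => π (f q.1 q.2) + c * φ q.1 q.2)
    (hb : b ∈ U) (hu : u ∈ U)
    (hmax : π (fderiv ℝ (fun y => f a y) b (u - b)) + c * fderiv ℝ (fun y => φ a y) b (u - b) ≤ 0) :
    π (f x u) + c * φ x u ≤ π (f a b) + c * φ a b
      + (π (fderiv ℝ (fun z => f z b) a (x - a)) + c * fderiv ℝ (fun z => φ z b) a (x - a)) := by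
  have hH := (π.hasFDerivAt.comp (a, b) hf.hasFDerivAt).add (hφ.hasFDerivAt.const_mul c)
  have hgrad := hconc.le_add_fderiv (x := (a, b)) (y := (x, u)) ⟨mem_univ _, hb⟩ ⟨mem_univ _, hu⟩ hH
  simp only [add_apply, smul_apply, smul_eq_mul, ContinuousLinearMap.comp_apply, map_add,
    fderiv_uncurry_apply hf, fderiv_uncurry_apply hφ, Prod.fst_sub, Prod.snd_sub] at hgrad
  linarith

theorem stmt_18_general {n d : ℕ}
    (U : Set (Fin d → ℝ))
    (β : ℝ) (hβ : 0 < β ∧ β < 1) (σ : Fin n → ℝ)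
    (φ : (Fin n → ℝ) → (Fin d → ℝ) → ℝ)
    (f : (Fin n → ℝ) → (Fin d → ℝ) → (Fin n → ℝ))
    (xhat : ℕ → (Fin n → ℝ)) (uhat : ℕ → (Fin d → ℝ))
    (hxhat0 : Tendsto xhat atTop (𝓝 0))
    (huhatU : ∀ t, uhat t ∈ U) (huhatbd : IsBounded (Set.range uhat))
    (p : ℕ → ((Fin n → ℝ) →L[ℝ] ℝ)) (hp : Summable fun t => ‖p t‖)
    -- (i)
    (hinit : xhat 0 = σ) (hdyn : ∀ t : ℕ, xhat (t + 1) = f (xhat t) (uhat t))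
    -- (ii): φ, f of class C¹ on ℝⁿ × U
    (U1 : Set (Fin d → ℝ)) (hU1open : IsOpen U1) (hUU1 : U ⊆ U1)
    (hφ : ContDiffOn ℝ 1 (fun q : (Fin n → ℝ) × (Fin d → ℝ) => φ q.1 q.2) (Set.univ ×ˢ U1))
    (hf : ContDiffOn ℝ 1 (fun q : (Fin n → ℝ) × (Fin d → ℝ) => f q.1 q.2) (Set.univ ×ˢ U1))
    -- (iii): φ maps bounded subsets of ℝⁿ × U into bounded subsets of ℝ
    (hφbdd : ∀ s : Set ((Fin n → ℝ) × (Fin d → ℝ)), s ⊆ Set.univ ×ˢ U → IsBounded s →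
      IsBounded ((fun q : (Fin n → ℝ) × (Fin d → ℝ) => φ q.1 q.2) '' s))
    -- (iv): adjoint equation
    (hAE : ∀ t : ℕ, 1 ≤ t →
      p t = (p (t + 1)).comp (fderiv ℝ (fun x => f x (uhat t)) (xhat t))
        + β ^ t • fderiv ℝ (fun x => φ x (uhat t)) (xhat t))
    -- (v): weak maximum principle
    (hWM : ∀ t : ℕ, ∀ u ∈ U,
      (p (t + 1)) (fderiv ℝ (fun v => f (xhat t) v) (uhat t) (u - uhat t))
        + β ^ t * (fderiv ℝ (fun v => φ (xhat t) v) (uhat t) (u - uhat t)) ≤ 0)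
    -- (vi): concavity of the Hamiltonian
    (hconc : ∀ t : ℕ, ConcaveOn ℝ (Set.univ ×ˢ U)
      (fun q : (Fin n → ℝ) × (Fin d → ℝ) => (p (t + 1)) (f q.1 q.2) + β ^ t * φ q.1 q.2)) :
    -- conclusion: (x̂, û) also solves the problem over bounded state sequences
    ∀ (x : ℕ → (Fin n → ℝ)) (u : ℕ → (Fin d → ℝ)),
      IsBounded (Set.range x) → (∀ t, u t ∈ U) → IsBounded (Set.range u) →
      x 0 = σ → (∀ t : ℕ, x (t + 1) = f (x t) (u t)) →
      (∑' t : ℕ, β ^ t * φ (x t) (u t)) ≤ ∑' t : ℕ, β ^ t * φ (xhat t) (uhat t) := by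
  intro x u hxbd huU hubd hx0 hxdyn
  have hxhatbd : IsBounded (range xhat) := Metric.isBounded_range_of_tendsto _ hxhat0
  have hopen : IsOpen (univ ×ˢ U1 : Set ((Fin n → ℝ) × (Fin d → ℝ))) := isOpen_univ.prod hU1open
  have hmem : ∀ t, (xhat t, uhat t) ∈ univ ×ˢ U1 := fun t => ⟨mem_univ _, hUU1 (huhatU t)⟩
  have hstep : ∀ t, β ^ t * φ (x t) (u t) - β ^ t * φ (xhat t) (uhat t)
      ≤ p t (x t - xhat t) - p (t + 1) (x (t + 1) - xhat (t + 1)) := by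
    intro t
    have hH := hamiltonian_le_add_fderiv (x := x t)
      ((hf.differentiableOn one_ne_zero).differentiableAt (hopen.mem_nhds (hmem t)))
      ((hφ.differentiableOn one_ne_zero).differentiableAt (hopen.mem_nhds (hmem t)))
      (hconc t) (huhatU t) (huU t) (hWM t (u t) (huU t))
    -- (iv) is only assumed for `t ≥ 1`; at `t = 0` the increment `x 0 - xhat 0` vanishes
    have hadj : p (t + 1) (fderiv ℝ (fun z => f z (uhat t)) (xhat t) (x t - xhat t))
        + β ^ t * fderiv ℝ (fun z => φ z (uhat t)) (xhat t) (x t - xhat t)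
        = p t (x t - xhat t) := by
      rcases Nat.eq_zero_or_pos t with rfl | ht
      · simp [hx0, hinit]
      · simp [hAE t ht]
    rw [← hxdyn, ← hdyn, hadj] at hH
    rw [map_sub (p (t + 1))]
    linarith
  have hsum : ∀ {y : ℕ → Fin n → ℝ} {v : ℕ → Fin d → ℝ}, IsBounded (range y) → (∀ t, v t ∈ U) →
      IsBounded (range v) → Summable fun t => β ^ t * φ (y t) (v t) := fun hy hv hvb =>
    summable_pow_mul_of_isBounded hβ.1.le hβ.2 (isBounded_range_of_isBounded_image hφbdd hy hv hvb)
  have hlim : Tendsto (fun t => p t (x t - xhat t)) atTop (𝓝 0) :=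
    tendsto_apply_zero_of_isBounded hp.tendsto_atTop_zero
      ((isBounded_sub hxbd hxhatbd).subset
        (range_subset_iff.2 fun t => sub_mem_sub (mem_range_self t) (mem_range_self t)))
  have hsx := hsum hxbd huU hubd
  have hsxhat := hsum hxhatbd huhatU huhatbd
  have hle := tsum_le_of_le_sub_succ (hsx.sub hsxhat) hlim hstep
  rw [hsx.tsum_sub hsxhat, hx0, hinit, sub_self, map_zero] at hle
  linarith

/-- Remark 10.3.  Under the hypotheses of the sufficiency theorem for
(P1) (Theorem 10.1, conditions (i)–(vi)), the process `(x̂, û)` also maximizes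
`Σ βᵗ φ(x_t, u_t)` among all *bounded* sequences `x ∈ ℓ∞(ℕ, ℝⁿ)` and `u ∈ ℓ∞(ℕ, U)`
with `x₀ = σ` and `x_{t+1} = f(x_t, u_t)`.  `φ` and `f` are total
functions; "of class `C¹` on `ℝⁿ × U`" is rendered by `C¹` on `univ ×ˢ U₁` for an open
`U₁ ⊇ U`. -/
theorem stmt_18 {n d : ℕ}
    (U : Set (Fin d → ℝ)) (hUne : U.Nonempty) (hUconv : Convex ℝ U)
    (β : ℝ) (hβ : 0 < β ∧ β < 1) (σ : Fin n → ℝ)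
    (φ : (Fin n → ℝ) → (Fin d → ℝ) → ℝ)
    (f : (Fin n → ℝ) → (Fin d → ℝ) → (Fin n → ℝ))
    (xhat : ℕ → (Fin n → ℝ)) (uhat : ℕ → (Fin d → ℝ))
    (hxhat0 : Tendsto xhat atTop (𝓝 0))
    (huhatU : ∀ t, uhat t ∈ U) (huhatbd : IsBounded (Set.range uhat))
    (p : ℕ → ((Fin n → ℝ) →L[ℝ] ℝ)) (hp : Summable fun t => ‖p t‖)
    -- (i)
    (hinit : xhat 0 = σ) (hdyn : ∀ t : ℕ, xhat (t + 1) = f (xhat t) (uhat t))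
    -- (ii): φ, f of class C¹ on ℝⁿ × U
    (U1 : Set (Fin d → ℝ)) (hU1open : IsOpen U1) (hUU1 : U ⊆ U1)
    (hφ : ContDiffOn ℝ 1 (fun q : (Fin n → ℝ) × (Fin d → ℝ) => φ q.1 q.2) (Set.univ ×ˢ U1))
    (hf : ContDiffOn ℝ 1 (fun q : (Fin n → ℝ) × (Fin d → ℝ) => f q.1 q.2) (Set.univ ×ˢ U1))
    -- (iii): φ maps bounded subsets of ℝⁿ × U into bounded subsets of ℝ
    (hφbdd : ∀ s : Set ((Fin n → ℝ) × (Fin d → ℝ)), s ⊆ Set.univ ×ˢ U → IsBounded s →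
      IsBounded ((fun q : (Fin n → ℝ) × (Fin d → ℝ) => φ q.1 q.2) '' s))
    -- (iv): adjoint equation
    (hAE : ∀ t : ℕ, 1 ≤ t →
      p t = (p (t + 1)).comp (fderiv ℝ (fun x => f x (uhat t)) (xhat t))
        + β ^ t • fderiv ℝ (fun x => φ x (uhat t)) (xhat t))
    -- (v): weak maximum principle
    (hWM : ∀ t : ℕ, ∀ u ∈ U,
      (p (t + 1)) (fderiv ℝ (fun v => f (xhat t) v) (uhat t) (u - uhat t))
        + β ^ t * (fderiv ℝ (fun v => φ (xhat t) v) (uhat t) (u - uhat t)) ≤ 0)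
    -- (vi): concavity of the Hamiltonian
    (hconc : ∀ t : ℕ, ConcaveOn ℝ (Set.univ ×ˢ U)
      (fun q : (Fin n → ℝ) × (Fin d → ℝ) => (p (t + 1)) (f q.1 q.2) + β ^ t * φ q.1 q.2)) :
    -- conclusion: (x̂, û) also solves the problem over bounded state sequences
    ∀ (x : ℕ → (Fin n → ℝ)) (u : ℕ → (Fin d → ℝ)),
      IsBounded (Set.range x) → (∀ t, u t ∈ U) → IsBounded (Set.range u) →
      x 0 = σ → (∀ t : ℕ, x (t + 1) = f (x t) (u t)) →
      (∑' t : ℕ, β ^ t * φ (x t) (u t)) ≤ ∑' t : ℕ, β ^ t * φ (xhat t) (uhat t) :=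
  stmt_18_general U β hβ σ φ f xhat uhat hxhat0 huhatU huhatbd p hp hinit hdyn U1 hU1open hUU1 hφ hf
    hφbdd hAE hWM hconc
end
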